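/- arXiv:math/0511129 — 6 statements merged into one kernel-verified Lean document; each statement's English description precedes it below -/
import Mathlib

section
/- For every integer q ≥ 2 the following data form a symmetric, homogeneous, nontrivial, amorphic C-algebra of degree n = q² (the affine C-algebra of order q): R = {0, 1, …, q+1} with e = 0, the identity involution, degrees d_0 = 1 and d_i = q − 1 for 1 ≤ i ≤ q+1, and structure constants given for 1 ≤ i, j ≤ q+1 by c_{0,j}^k = δ_{j,k}, c_{i,0}^k = δ_{i,k}, c_{i,i}^0 = q − 1, c_{i,i}^i = q − 2, c_{i,i}^k = 0 for k ∉ {0, i}, and, for i ≠ j, c_{i,j}^k = 1 if k ∉ {0, i, j} and c_{i,j}^k = 0 if k ∈ {0, i, j}. -/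
open Finset

/-- Data of a `C`-algebra: a unit `e`, an involution `inv` (written `*` in the paper),
degrees `d`, and structure constants `c`. -/
structure CAlgebraData (R : Type*) where
  e : R
  inv : R → R
  d : R → ℝ
  c : R → R → R → ℝ

/-- The axioms of a `C`-algebra. -/
def IsCAlgebra {R : Type*} [Fintype R] [DecidableEq R] (A : CAlgebraData R) : Prop :=
  A.inv A.e = A.e ∧
  (∀ r, A.inv (A.inv r) = r) ∧
  (∀ r, 0 < A.d r) ∧
  (∀ s t, A.c A.e s t = if s = t then 1 else 0) ∧
  (∀ r t, A.c r A.e t = if r = t then 1 else 0) ∧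
  (∀ r s t u, ∑ v, A.c r s v * A.c v t u = ∑ v, A.c r v u * A.c s t v) ∧
  (∀ r s t, A.c r s t = A.c (A.inv s) (A.inv r) (A.inv t)) ∧
  (∀ r s, A.c r s A.e = if s = A.inv r then A.d r else 0) ∧
  A.d A.e = 1 ∧
  (∀ r, A.d (A.inv r) = A.d r) ∧
  (∀ r s, ∑ t, A.d t * A.c r s t = A.d r * A.d s)

/-- `π` is a partition of the (finite) type `R` into nonempty classes. -/
def IsPartition {R : Type*} [Fintype R] (π : Finset (Finset R)) : Prop :=
  (∀ S ∈ π, S.Nonempty) ∧ ∀ r : R, ∃! S, S ∈ π ∧ r ∈ S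

/-- A `C`-algebra is amorphic if every partition of `R` containing `{e}` as a class
gives rise to a fusion `C`-algebra. -/
def IsAmorphic {R : Type*} [Fintype R] [DecidableEq R] (A : CAlgebraData R) : Prop :=
  ∀ π : Finset (Finset R), IsPartition π → ({A.e} : Finset R) ∈ π →
    (∀ S ∈ π, S.image A.inv ∈ π) ∧
    ∀ S ∈ π, ∀ T ∈ π, ∀ U ∈ π, ∀ u ∈ U, ∀ v ∈ U,
      ∑ r ∈ S, ∑ s ∈ T, A.c r s u = ∑ r ∈ S, ∑ s ∈ T, A.c r s v

/-- The degree `n` of a `C`-algebra. -/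
noncomputable def CAlgebraData.degree {R : Type*} [Fintype R] (A : CAlgebraData R) : ℝ :=
  ∑ r, A.d r

/-- `ε ∈ {-1, 1}` is the sign of a (nontrivial amorphic) `C`-algebra. -/
def IsSign {R : Type*} [Fintype R] (A : CAlgebraData R) (ε : ℝ) : Prop :=
  (ε = -1 ∨ ε = 1) ∧ 0 < Real.sqrt A.degree + ε ∧
    ∀ r s t, r ≠ A.e → s ≠ A.e → t ≠ A.e → r ≠ s → s ≠ t → r ≠ t →
      A.c r s t = A.d r * A.d s / (Real.sqrt A.degree + ε) ^ 2

namespace Stmt1Aux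
variable (q : ℕ)

def dd (i : Fin (q+2)) : ℝ := if i = 0 then 1 else (q:ℝ) - 1

def chi (j r : Fin (q+2)) : ℝ :=
  if r = 0 then 1 else if j = 0 then (q:ℝ) - 1 else if r = j then (q:ℝ) - 1 else -1

def cc (i j k : Fin (q+2)) : ℝ :=
  if i = 0 then (if j = k then 1 else 0)
  else if j = 0 then (if i = k then 1 else 0)
  else if i = j then (if k = 0 then (q:ℝ) - 1 else if k = i then (q:ℝ) - 2 else 0)
  else (if k = 0 ∨ k = i ∨ k = j then 0 else 1)

lemma sum_delta (x : Fin (q+2)) (k : ℝ) : ∑ r : Fin (q+2), (if r = x then k else 0) = k := by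
  simp

lemma chi_e (j : Fin (q+2)) : chi q j 0 = 1 := by simp [chi]

lemma chi_zero (t : Fin (q+2)) : chi q 0 t = dd q t := by simp [chi, dd]

lemma chi_val0 {r : Fin (q+2)} (hr : r ≠ 0) : chi q 0 r = (q:ℝ) - 1 := by simp [chi, hr]

lemma chi_val {j r : Fin (q+2)} (hr : r ≠ 0) (hj : j ≠ 0) :
    chi q j r = if r = j then (q:ℝ) - 1 else -1 := by simp [chi, hr, hj]

lemma cc_e_left (s t : Fin (q+2)) : cc q 0 s t = if s = t then 1 else 0 := by simp [cc]

lemma cc_e_right (r t : Fin (q+2)) : cc q r 0 t = if r = t then 1 else 0 := by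
  rcases eq_or_ne r 0 with h | h
  · subst h; simp [cc]
  · simp [cc, h]

lemma cc_diag {r : Fin (q+2)} (hr : r ≠ 0) (t : Fin (q+2)) :
    cc q r r t = if t = 0 then (q:ℝ) - 1 else if t = r then (q:ℝ) - 2 else 0 := by
  simp [cc, hr]

lemma cc_off {r s : Fin (q+2)} (hr : r ≠ 0) (hs : s ≠ 0) (hrs : r ≠ s) (t : Fin (q+2)) :
    cc q r s t = if t = 0 ∨ t = r ∨ t = s then 0 else 1 := by
  simp [cc, hr, hs, hrs]

lemma cc_comm (r s t : Fin (q+2)) : cc q r s t = cc q s r t := by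
  rcases eq_or_ne r 0 with hr | hr
  · subst hr
    rcases eq_or_ne s 0 with hs | hs
    · subst hs; rfl
    · rw [cc_e_left, cc_e_right]
  rcases eq_or_ne s 0 with hs | hs
  · subst hs; rw [cc_e_left, cc_e_right]
  rcases eq_or_ne r s with hrs | hrs
  · subst hrs; rfl
  · rw [cc_off q hr hs hrs, cc_off q hs hr (Ne.symm hrs),
      if_congr (by tauto : (t = 0 ∨ t = r ∨ t = s) ↔ (t = 0 ∨ t = s ∨ t = r)) rfl rfl]

lemma cc_C3 (r s : Fin (q+2)) : cc q r s 0 = if s = r then dd q r else 0 := by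
  rcases eq_or_ne r 0 with hr | hr
  · subst hr; rw [cc_e_left]
    rcases eq_or_ne s 0 with hs | hs
    · subst hs; simp [dd]
    · rw [if_neg hs, if_neg hs]
  rcases eq_or_ne s 0 with hs | hs
  · subst hs
    rw [cc_e_right, if_neg hr, if_neg (fun h => hr h.symm)]
  rcases eq_or_ne r s with hrs | hrs
  · subst hrs
    rw [cc_diag q hr, if_pos rfl, if_pos rfl]
    simp [dd, hr]
  · rw [cc_off q hr hs hrs, if_pos (Or.inl rfl), if_neg (fun h => hrs h.symm)]

lemma sum_chi (j : Fin (q+2)) : ∑ t, chi q j t = if j = 0 then (q:ℝ)^2 else 0 := by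
  rcases eq_or_ne j 0 with hj | hj
  · subst hj
    rw [if_pos rfl]
    have : ∀ t : Fin (q+2), chi q 0 t = ((q:ℝ)-1) + (if t = 0 then (2 - (q:ℝ)) else 0) := by
      intro t; simp only [chi]; split_ifs <;> ring
    rw [Finset.sum_congr rfl fun t _ => this t, Finset.sum_add_distrib, sum_delta,
      Finset.sum_const, Finset.card_univ, Fintype.card_fin]
    push_cast
    ring
  · have : ∀ t : Fin (q+2), chi q j t = -1 + (if t = 0 then (2:ℝ) else 0)
        + (if t = j then (q:ℝ) else 0) := by
      intro t; simp only [chi]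
      split_ifs with h1 h2
      case pos => exact absurd (h1 ▸ h2 : (0:Fin (q+2)) = j).symm hj
      all_goals ring
    rw [Finset.sum_congr rfl fun t _ => this t, Finset.sum_add_distrib, Finset.sum_add_distrib,
      sum_delta, sum_delta, Finset.sum_const, Finset.card_univ, Fintype.card_fin, if_neg hj]
    push_cast
    ring

lemma sum_dd : ∑ j, dd q j = (q:ℝ)^2 := by
  have : ∀ j : Fin (q+2), dd q j = ((q:ℝ)-1) + (if j = 0 then (2 - (q:ℝ)) else 0) := by
    intro j; simp only [dd]; split_ifs <;> ring
  rw [Finset.sum_congr rfl fun t _ => this t, Finset.sum_add_distrib, sum_delta,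
    Finset.sum_const, Finset.card_univ, Fintype.card_fin]
  push_cast
  ring

lemma lemA (j r s : Fin (q+2)) : ∑ t, cc q r s t * chi q j t = chi q j r * chi q j s := by
  rcases eq_or_ne r 0 with hr | hr
  · subst hr
    have : ∀ t : Fin (q+2), cc q 0 s t * chi q j t = if t = s then chi q j s else 0 := by
      intro t
      rw [cc_e_left]
      rcases eq_or_ne t s with h | h
      · subst h; simp
      · rw [if_neg (Ne.symm h), if_neg h, zero_mul]
    rw [Finset.sum_congr rfl fun t _ => this t, sum_delta, chi_e, one_mul]
  rcases eq_or_ne s 0 with hs | hs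
  · subst hs
    have : ∀ t : Fin (q+2), cc q r 0 t * chi q j t = if t = r then chi q j r else 0 := by
      intro t
      rw [cc_e_right]
      rcases eq_or_ne t r with h | h
      · subst h; simp
      · rw [if_neg (Ne.symm h), if_neg h, zero_mul]
    rw [Finset.sum_congr rfl fun t _ => this t, sum_delta, chi_e, mul_one]
  rcases eq_or_ne r s with hrs | hrs
  · subst hrs
    have : ∀ t : Fin (q+2), cc q r r t * chi q j t
        = (if t = 0 then ((q:ℝ)-1) * chi q j 0 else 0)
          + (if t = r then ((q:ℝ)-2) * chi q j r else 0) := by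
      intro t
      rw [cc_diag q hr]
      rcases eq_or_ne t 0 with h0 | h0
      · subst h0; rw [if_pos rfl, if_pos rfl, if_neg (Ne.symm hr), add_zero]
      · rw [if_neg h0, if_neg h0]
        rcases eq_or_ne t r with h1 | h1
        · subst h1; rw [if_pos rfl, if_pos rfl, zero_add]
        · rw [if_neg h1, if_neg h1, zero_mul, zero_add]
    rw [Finset.sum_congr rfl fun t _ => this t, Finset.sum_add_distrib, sum_delta, sum_delta,
      chi_e, mul_one]
    rcases eq_or_ne j 0 with hj | hj
    · subst hj; rw [chi_val0 q hr]; ring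
    · rw [chi_val q hr hj]
      rcases eq_or_ne r j with h1 | h1
      · rw [if_pos h1]; ring
      · rw [if_neg h1]; ring
  · have : ∀ t : Fin (q+2), cc q r s t * chi q j t
        = chi q j t - (if t = 0 then chi q j 0 else 0) - (if t = r then chi q j r else 0)
          - (if t = s then chi q j s else 0) := by
      intro t
      rw [cc_off q hr hs hrs]
      rcases eq_or_ne t 0 with h0 | h0
      · subst h0
        rw [if_pos (Or.inl rfl), if_pos rfl, if_neg (Ne.symm hr), if_neg (Ne.symm hs)]; ring
      rcases eq_or_ne t r with h1 | h1
      · subst h1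
        rw [if_pos (Or.inr (Or.inl rfl)), if_neg h0, if_pos rfl, if_neg hrs]; ring
      rcases eq_or_ne t s with h2 | h2
      · subst h2
        rw [if_pos (Or.inr (Or.inr rfl)), if_neg h0, if_neg h1, if_pos rfl]; ring
      · rw [if_neg (by tauto), if_neg h0, if_neg h1, if_neg h2]; ring
    rw [Finset.sum_congr rfl fun t _ => this t, Finset.sum_sub_distrib, Finset.sum_sub_distrib,
      Finset.sum_sub_distrib, sum_delta, sum_delta, sum_delta, sum_chi, chi_e]
    rcases eq_or_ne j 0 with hj | hj
    · subst hj; rw [if_pos rfl, chi_val0 q hr, chi_val0 q hs]; ring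
    · rw [if_neg hj, chi_val q hr hj, chi_val q hs hj]
      rcases eq_or_ne r j with h1 | h1 <;> rcases eq_or_ne s j with h2 | h2
      · exact absurd (h1.trans h2.symm) hrs
      · rw [if_pos h1, if_neg h2]; ring
      · rw [if_neg h1, if_pos h2]; ring
      · rw [if_neg h1, if_neg h2]; ring

lemma lemO (r s : Fin (q+2)) :
    ∑ j, dd q j * chi q j r * chi q j s = (q:ℝ)^2 * dd q r * (if r = s then 1 else 0) := by
  rcases eq_or_ne r 0 with hr | hr
  · subst hr
    rcases eq_or_ne s 0 with hs | hs
    · subst hs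
      simp only [chi_e, mul_one, if_pos rfl]
      rw [sum_dd q]
      simp [dd]
    · rw [if_neg (Ne.symm hs)]
      have : ∀ j : Fin (q+2), dd q j * chi q j 0 * chi q j s
          = -((q:ℝ)-1) + (if j = 0 then 2*(q:ℝ)-2 else 0)
            + (if j = s then (q:ℝ)*((q:ℝ)-1) else 0) := by
        intro j
        rw [chi_e, mul_one]
        rcases eq_or_ne j 0 with hj | hj
        · subst hj
          rw [if_pos rfl, if_neg (Ne.symm hs), chi_val0 q hs]
          simp only [dd, eq_self_iff_true, if_true]; ring
        · rw [if_neg hj, chi_val q hs hj]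
          rcases eq_or_ne s j with h1 | h1
          · rw [if_pos h1, if_pos h1.symm]
            simp only [dd, if_neg hj]; ring
          · rw [if_neg h1, if_neg (fun h => h1 (h.symm))]
            simp only [dd, if_neg hj]; ring
      rw [Finset.sum_congr rfl fun t _ => this t, Finset.sum_add_distrib, Finset.sum_add_distrib,
        sum_delta, sum_delta, Finset.sum_const, Finset.card_univ, Fintype.card_fin]
      push_cast
      ring
  rcases eq_or_ne s 0 with hs | hs
  · subst hs
    rw [if_neg hr]
    have : ∀ j : Fin (q+2), dd q j * chi q j r * chi q j 0
        = -((q:ℝ)-1) + (if j = 0 then 2*(q:ℝ)-2 else 0) + (if j = r then (q:ℝ)*((q:ℝ)-1) else 0) := by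
      intro j
      rw [chi_e, mul_one]
      rcases eq_or_ne j 0 with hj | hj
      · subst hj
        rw [if_pos rfl, if_neg (Ne.symm hr), chi_val0 q hr]
        simp only [dd, eq_self_iff_true, if_true]; ring
      · rw [if_neg hj, chi_val q hr hj]
        rcases eq_or_ne r j with h1 | h1
        · rw [if_pos h1, if_pos h1.symm]
          simp only [dd, if_neg hj]; ring
        · rw [if_neg h1, if_neg (fun h => h1 (h.symm))]
          simp only [dd, if_neg hj]; ring
    rw [Finset.sum_congr rfl fun t _ => this t, Finset.sum_add_distrib, Finset.sum_add_distrib,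
      sum_delta, sum_delta, Finset.sum_const, Finset.card_univ, Fintype.card_fin]
    push_cast
    ring
  rcases eq_or_ne r s with hrs | hrs
  · subst hrs
    rw [if_pos rfl, mul_one]
    have : ∀ j : Fin (q+2), dd q j * chi q j r * chi q j r
        = ((q:ℝ)-1) + (if j = 0 then ((q:ℝ)-1)^2-((q:ℝ)-1) else 0)
          + (if j = r then ((q:ℝ)-1)^3-((q:ℝ)-1) else 0) := by
      intro j
      rcases eq_or_ne j 0 with hj | hj
      · subst hj
        rw [if_pos rfl, if_neg (Ne.symm hr), chi_val0 q hr]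
        simp only [dd, eq_self_iff_true, if_true]; ring
      · rw [if_neg hj, chi_val q hr hj]
        rcases eq_or_ne r j with h1 | h1
        · rw [if_pos h1, if_pos h1.symm]
          simp only [dd, if_neg hj]; ring
        · rw [if_neg h1, if_neg (fun h => h1 (h.symm))]
          simp only [dd, if_neg hj]; ring
    rw [Finset.sum_congr rfl fun t _ => this t, Finset.sum_add_distrib, Finset.sum_add_distrib,
      sum_delta, sum_delta, Finset.sum_const, Finset.card_univ, Fintype.card_fin]
    simp only [dd, if_neg hr]
    push_cast
    ring
  · rw [if_neg hrs, mul_zero]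
    have : ∀ j : Fin (q+2), dd q j * chi q j r * chi q j s
        = ((q:ℝ)-1) + (if j = 0 then ((q:ℝ)-1)^2-((q:ℝ)-1) else 0)
          + (if j = r then -((q:ℝ)-1)^2-((q:ℝ)-1) else 0)
          + (if j = s then -((q:ℝ)-1)^2-((q:ℝ)-1) else 0) := by
      intro j
      rcases eq_or_ne j 0 with hj | hj
      · subst hj
        rw [if_pos rfl, if_neg (Ne.symm hr), if_neg (Ne.symm hs), chi_val0 q hr, chi_val0 q hs]
        simp only [dd, eq_self_iff_true, if_true]; ring
      · rw [if_neg hj, chi_val q hr hj, chi_val q hs hj]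
        rcases eq_or_ne r j with h1 | h1 <;> rcases eq_or_ne s j with h2 | h2
        · exact absurd (h1.trans h2.symm) hrs
        · rw [if_pos h1, if_neg h2, if_pos h1.symm, if_neg (fun h => h2 h.symm)]
          simp only [dd, if_neg hj]; ring
        · rw [if_neg h1, if_pos h2, if_neg (fun h => h1 h.symm), if_pos h2.symm]
          simp only [dd, if_neg hj]; ring
        · rw [if_neg h1, if_neg h2, if_neg (fun h => h1 h.symm), if_neg (fun h => h2 h.symm)]
          simp only [dd, if_neg hj]; ring
    rw [Finset.sum_congr rfl fun t _ => this t, Finset.sum_add_distrib, Finset.sum_add_distrib,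
      Finset.sum_add_distrib, sum_delta, sum_delta, sum_delta, Finset.sum_const,
      Finset.card_univ, Fintype.card_fin]
    push_cast
    ring

lemma lemC (v t u : Fin (q+2)) :
    (q:ℝ)^2 * dd q u * cc q v t u = ∑ j, dd q j * chi q j u * chi q j v * chi q j t := by
  have step1 : ∀ j : Fin (q+2), dd q j * chi q j u * chi q j v * chi q j t
      = ∑ w, cc q v t w * (dd q j * chi q j u * chi q j w) := by
    intro j
    calc dd q j * chi q j u * chi q j v * chi q j t
        = dd q j * chi q j u * (chi q j v * chi q j t) := by ring
      _ = dd q j * chi q j u * (∑ w, cc q v t w * chi q j w) := by rw [lemA]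
      _ = ∑ w, cc q v t w * (dd q j * chi q j u * chi q j w) := by
          rw [Finset.mul_sum]; exact Finset.sum_congr rfl fun w _ => by ring
  rw [Finset.sum_congr rfl fun j _ => step1 j, Finset.sum_comm]
  have step2 : ∀ w : Fin (q+2), ∑ j, cc q v t w * (dd q j * chi q j u * chi q j w)
      = if w = u then (q:ℝ)^2 * dd q u * cc q v t u else 0 := by
    intro w
    rw [← Finset.mul_sum, lemO]
    rcases eq_or_ne w u with h | h
    · subst h; rw [if_pos rfl, if_pos rfl, mul_one]; ring
    · rw [if_neg h, if_neg (Ne.symm h), mul_zero, mul_zero]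
  rw [Finset.sum_congr rfl fun w _ => step2 w, sum_delta]

lemma cc_assoc (hq : 2 ≤ q) (r s t u : Fin (q+2)) :
    ∑ v, cc q r s v * cc q v t u = ∑ v, cc q r v u * cc q s t v := by
  have hq' : (2:ℝ) ≤ (q:ℝ) := by exact_mod_cast hq
  have hd : (0:ℝ) < dd q u := by
    simp only [dd]
    split_ifs
    · norm_num
    · linarith
  have hne : ((q:ℝ)^2 * dd q u) ≠ 0 := by positivity
  apply mul_left_cancel₀ hne
  have lhs : (q:ℝ)^2 * dd q u * ∑ v, cc q r s v * cc q v t u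
      = ∑ j, dd q j * chi q j u * chi q j t * (chi q j r * chi q j s) := by
    rw [Finset.mul_sum]
    calc ∑ v, (q:ℝ)^2 * dd q u * (cc q r s v * cc q v t u)
        = ∑ v, cc q r s v * ((q:ℝ)^2 * dd q u * cc q v t u) := by
          exact Finset.sum_congr rfl fun v _ => by ring
      _ = ∑ v, cc q r s v * ∑ j, dd q j * chi q j u * chi q j v * chi q j t := by
          exact Finset.sum_congr rfl fun v _ => by rw [lemC]
      _ = ∑ v, ∑ j, cc q r s v * (dd q j * chi q j u * chi q j v * chi q j t) := by
          exact Finset.sum_congr rfl fun v _ => by rw [Finset.mul_sum]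
      _ = ∑ j, ∑ v, cc q r s v * (dd q j * chi q j u * chi q j v * chi q j t) := by
          rw [Finset.sum_comm]
      _ = ∑ j, dd q j * chi q j u * chi q j t * ∑ v, cc q r s v * chi q j v := by
          refine Finset.sum_congr rfl fun j _ => ?_
          rw [Finset.mul_sum]
          exact Finset.sum_congr rfl fun v _ => by ring
      _ = ∑ j, dd q j * chi q j u * chi q j t * (chi q j r * chi q j s) := by
          exact Finset.sum_congr rfl fun j _ => by rw [lemA]
  have rhs : (q:ℝ)^2 * dd q u * ∑ v, cc q r v u * cc q s t v
      = ∑ j, dd q j * chi q j u * chi q j r * (chi q j s * chi q j t) := by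
    rw [Finset.mul_sum]
    calc ∑ v, (q:ℝ)^2 * dd q u * (cc q r v u * cc q s t v)
        = ∑ v, cc q s t v * ((q:ℝ)^2 * dd q u * cc q r v u) := by
          exact Finset.sum_congr rfl fun v _ => by ring
      _ = ∑ v, cc q s t v * ∑ j, dd q j * chi q j u * chi q j r * chi q j v := by
          exact Finset.sum_congr rfl fun v _ => by rw [lemC]
      _ = ∑ v, ∑ j, cc q s t v * (dd q j * chi q j u * chi q j r * chi q j v) := by
          exact Finset.sum_congr rfl fun v _ => by rw [Finset.mul_sum]
      _ = ∑ j, ∑ v, cc q s t v * (dd q j * chi q j u * chi q j r * chi q j v) := by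
          rw [Finset.sum_comm]
      _ = ∑ j, dd q j * chi q j u * chi q j r * ∑ v, cc q s t v * chi q j v := by
          refine Finset.sum_congr rfl fun j _ => ?_
          rw [Finset.mul_sum]
          exact Finset.sum_congr rfl fun v _ => by ring
      _ = ∑ j, dd q j * chi q j u * chi q j r * (chi q j s * chi q j t) := by
          exact Finset.sum_congr rfl fun j _ => by rw [lemA]
  rw [lhs, rhs]
  exact Finset.sum_congr rfl fun j _ => by ring

lemma cc_C4 (r s : Fin (q+2)) : ∑ t, dd q t * cc q r s t = dd q r * dd q s := by
  have : ∀ t : Fin (q+2), dd q t * cc q r s t = cc q r s t * chi q 0 t := by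
    intro t; rw [chi_zero, mul_comm]
  rw [Finset.sum_congr rfl fun t _ => this t, lemA, chi_zero, chi_zero]

section Part
variable {R : Type*} [Fintype R]

lemma class_eq {π : Finset (Finset R)} (hπ : IsPartition π) {S T : Finset R}
    (hS : S ∈ π) (hT : T ∈ π) {x : R} (hxS : x ∈ S) (hxT : x ∈ T) : S = T := by
  obtain ⟨W, _, hW⟩ := hπ.2 x
  rw [hW S ⟨hS, hxS⟩, hW T ⟨hT, hxT⟩]

lemma mem_iff_mem {π : Finset (Finset R)} (hπ : IsPartition π) {U S : Finset R}
    (hU : U ∈ π) (hS : S ∈ π) {u v : R} (hu : u ∈ U) (hv : v ∈ U) : u ∈ S ↔ v ∈ S := by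
  constructor
  · intro h; rwa [class_eq hπ hS hU h hu]
  · intro h; rwa [class_eq hπ hS hU h hv]
end Part

lemma key_sum {S T : Finset (Fin (q+2))} (hS : (0 : Fin (q+2)) ∉ S) (hT : (0 : Fin (q+2)) ∉ T)
    {w : Fin (q+2)} (hw : w ≠ 0) :
    ∑ r ∈ S, ∑ s ∈ T, cc q r s w
      = (S.card : ℝ) * T.card - (if w ∈ S then (T.card : ℝ) else 0)
        - (S.card : ℝ) * (if w ∈ T then 1 else 0) - ((S ∩ T).card : ℝ)
        + (if w ∈ S ∩ T then (q:ℝ) else 0) := by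
  have inner : ∀ r ∈ S, ∑ s ∈ T, cc q r s w
      = (T.card : ℝ) - (if r = w then (T.card : ℝ) else 0) - (if w ∈ T then 1 else 0)
        - (if r ∈ T then 1 else 0) + (if r ∈ T then (if r = w then (q:ℝ) else 0) else 0) := by
    intro r hrS
    have hr : r ≠ 0 := fun h => hS (h ▸ hrS)
    have ptw : ∀ s ∈ T, cc q r s w
        = 1 - (if r = w then (1:ℝ) else 0) - (if s = w then 1 else 0) - (if s = r then 1 else 0)
          + (if s = r then (if r = w then (q:ℝ) else 0) else 0) := by
      intro s hsT
      have hs : s ≠ 0 := fun h => hT (h ▸ hsT)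
      rcases eq_or_ne s r with hsr | hsr
      · subst hsr
        rw [cc_diag q hr, if_neg hw]
        rcases eq_or_ne s w with h | h
        · subst h
          simp only [eq_self_iff_true, if_true]
          ring
        · rw [if_neg (fun hh : w = s => h hh.symm)]
          simp only [eq_self_iff_true, if_true]
          rw [if_neg h, if_neg h]
          ring
      · rw [cc_off q hr hs (Ne.symm hsr)]
        rcases eq_or_ne r w with h1 | h1
        · rw [if_pos (Or.inr (Or.inl h1.symm)), if_pos h1, if_neg hsr, if_neg hsr,
            if_neg (fun h : s = w => hsr (h.trans h1.symm))]
          ring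
        · rcases eq_or_ne s w with h2 | h2
          · rw [if_pos (Or.inr (Or.inr h2.symm)), if_neg h1, if_pos h2, if_neg hsr, if_neg hsr]
            ring
          · rw [if_neg (by push_neg; exact ⟨hw, fun h => h1 h.symm, fun h => h2 h.symm⟩),
              if_neg h1, if_neg h2, if_neg hsr, if_neg hsr]
            ring
    rw [Finset.sum_congr rfl ptw]
    rw [Finset.sum_add_distrib, Finset.sum_sub_distrib, Finset.sum_sub_distrib,
      Finset.sum_sub_distrib, Finset.sum_const, Finset.sum_const,
      Finset.sum_ite_eq' T w (fun _ => (1:ℝ)), Finset.sum_ite_eq' T r (fun _ => (1:ℝ)),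
      Finset.sum_ite_eq' T r (fun _ => (if r = w then (q:ℝ) else 0))]
    simp only [nsmul_eq_mul, mul_one, mul_ite, mul_zero]
  rw [Finset.sum_congr rfl inner]
  rw [Finset.sum_add_distrib, Finset.sum_sub_distrib, Finset.sum_sub_distrib,
    Finset.sum_sub_distrib, Finset.sum_const, Finset.sum_const,
    Finset.sum_ite_eq' S w (fun _ => (T.card : ℝ))]
  have hint : ∑ r ∈ S, (if r ∈ T then (1:ℝ) else 0) = ((S ∩ T).card : ℝ) := by
    rw [Finset.sum_ite_mem, Finset.sum_const, nsmul_eq_mul, mul_one]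
  have hlast : ∑ r ∈ S, (if r ∈ T then (if r = w then (q:ℝ) else 0) else 0)
      = (if w ∈ S ∩ T then (q:ℝ) else 0) := by
    rw [Finset.sum_ite_mem, Finset.sum_ite_eq' (S ∩ T) w (fun _ => (q:ℝ))]
  rw [hint, hlast]
  simp only [nsmul_eq_mul, mul_one]

end Stmt1Aux

/-- the affine `C`-algebra of order `q ≥ 2` is a symmetric, homogeneous,
nontrivial, amorphic `C`-algebra of degree `q²`. -/
theorem stmt_1 (q : ℕ) (hq : 2 ≤ q) :
    let A : CAlgebraData (Fin (q + 2)) :=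
      { e := 0
        inv := id
        d := fun i => if i = 0 then 1 else (q : ℝ) - 1
        c := fun i j k =>
          if i = 0 then (if j = k then 1 else 0)
          else if j = 0 then (if i = k then 1 else 0)
          else if i = j then
            (if k = 0 then (q : ℝ) - 1 else if k = i then (q : ℝ) - 2 else 0)
          else (if k = 0 ∨ k = i ∨ k = j then 0 else 1) }
    IsCAlgebra A ∧ (∀ r, A.inv r = r) ∧
      (∀ r s, r ≠ A.e → s ≠ A.e → A.d r = A.d s) ∧
      4 ≤ Fintype.card (Fin (q + 2)) ∧ IsAmorphic A ∧ A.degree = (q : ℝ) ^ 2 := by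
  intro A
  have hc : A.c = Stmt1Aux.cc q := rfl
  have hd : A.d = Stmt1Aux.dd q := rfl
  have hq' : (2:ℝ) ≤ (q:ℝ) := by exact_mod_cast hq
  have h0' : ∀ {π : Finset (Finset (Fin (q+2)))}, ({A.e} : Finset (Fin (q+2))) ∈ π →
      ({0} : Finset (Fin (q+2))) ∈ π := fun h => h
  refine ⟨⟨rfl, fun r => rfl, ?_, ?_, ?_, ?_, ?_, ?_, ?_, fun r => rfl, ?_⟩,
    fun r => rfl, ?_, ?_, ?_, ?_⟩
  · intro r
    show (0:ℝ) < Stmt1Aux.dd q r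
    simp only [Stmt1Aux.dd]
    split_ifs
    · norm_num
    · linarith
  · intro s t
    exact Stmt1Aux.cc_e_left q s t
  · intro r t
    exact Stmt1Aux.cc_e_right q r t
  · intro r s t u
    exact Stmt1Aux.cc_assoc q hq r s t u
  · intro r s t
    exact Stmt1Aux.cc_comm q r s t
  · intro r s
    exact Stmt1Aux.cc_C3 q r s
  · show Stmt1Aux.dd q 0 = 1
    simp [Stmt1Aux.dd]
  · intro r s
    exact Stmt1Aux.cc_C4 q r s
  · intro r s hr hs
    show Stmt1Aux.dd q r = Stmt1Aux.dd q s
    have hr' : r ≠ 0 := hr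
    have hs' : s ≠ 0 := hs
    simp [Stmt1Aux.dd, hr', hs']
  · simp only [Fintype.card_fin]
    omega
  · intro π hπ h0
    have h00 : ({0} : Finset (Fin (q+2))) ∈ π := h0' h0
    constructor
    · intro S hS
      have : S.image A.inv = S := Finset.image_id
      rwa [this]
    · intro S hS T hT U hU u hu v hv
      rcases eq_or_ne u 0 with hu0 | hu0
      · have hU0 : U = {0} :=
          Stmt1Aux.class_eq hπ hU h00 (hu0 ▸ hu) (Finset.mem_singleton_self 0)
        have hv0 : v = 0 := Finset.mem_singleton.mp (hU0 ▸ hv)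
        rw [hu0, hv0]
      · have hv0 : v ≠ 0 := by
          intro h
          apply hu0
          have hU0 : U = {0} :=
            Stmt1Aux.class_eq hπ hU h00 (h ▸ hv) (Finset.mem_singleton_self 0)
          exact Finset.mem_singleton.mp (hU0 ▸ hu)
        rcases eq_or_ne S {0} with hS0 | hS0
        · subst hS0
          rw [hc, Finset.sum_singleton, Finset.sum_singleton,
            Finset.sum_congr rfl (fun s _ => Stmt1Aux.cc_e_left q s u),
            Finset.sum_congr rfl (fun s _ => Stmt1Aux.cc_e_left q s v),
            Finset.sum_ite_eq' T u (fun _ => (1:ℝ)), Finset.sum_ite_eq' T v (fun _ => (1:ℝ)),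
            if_congr (Stmt1Aux.mem_iff_mem hπ hU hT hu hv) rfl rfl]
        · have h0S : (0 : Fin (q+2)) ∉ S := fun hmem =>
            hS0 (Stmt1Aux.class_eq hπ hS h00 hmem (Finset.mem_singleton_self 0))
          rcases eq_or_ne T {0} with hT0 | hT0
          · subst hT0
            rw [hc]
            have inner : ∀ w : Fin (q+2), ∑ r ∈ S, ∑ s ∈ ({0} : Finset (Fin (q+2))),
                Stmt1Aux.cc q r s w = ∑ r ∈ S, if r = w then (1:ℝ) else 0 := by
              intro w
              refine Finset.sum_congr rfl fun r _ => ?_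
              rw [Finset.sum_singleton, Stmt1Aux.cc_e_right]
            rw [inner u, inner v, Finset.sum_ite_eq' S u (fun _ => (1:ℝ)),
              Finset.sum_ite_eq' S v (fun _ => (1:ℝ)),
              if_congr (Stmt1Aux.mem_iff_mem hπ hU hS hu hv) rfl rfl]
          · have h0T : (0 : Fin (q+2)) ∉ T := fun hmem =>
              hT0 (Stmt1Aux.class_eq hπ hT h00 hmem (Finset.mem_singleton_self 0))
            have hiff1 : u ∈ S ↔ v ∈ S := Stmt1Aux.mem_iff_mem hπ hU hS hu hv
            have hiff2 : u ∈ T ↔ v ∈ T := Stmt1Aux.mem_iff_mem hπ hU hT hu hv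
            have hiff3 : u ∈ S ∩ T ↔ v ∈ S ∩ T := by
              simp only [Finset.mem_inter]
              exact and_congr hiff1 hiff2
            rw [hc, Stmt1Aux.key_sum q h0S h0T hu0, Stmt1Aux.key_sum q h0S h0T hv0,
              if_congr hiff1 rfl rfl, if_congr hiff2 rfl rfl, if_congr hiff3 rfl rfl]
  · exact Stmt1Aux.sum_dd q
end

section
/- Every nontrivial amorphic C-algebra is symmetric and commutative: if (R, e, *, d, c) is an amorphic C-algebra with |R| ≥ 4, then r* = r for all r ∈ R and c_{r,s}^t = c_{s,r}^t for all r, s, t ∈ R. -/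
open Finset

/-- every nontrivial amorphic `C`-algebra is symmetric and commutative. -/
theorem stmt_2 {R : Type*} [Fintype R] [DecidableEq R] (A : CAlgebraData R)
    (hA : IsCAlgebra A) (hnt : 4 ≤ Fintype.card R) (ham : IsAmorphic A) :
    (∀ r, A.inv r = r) ∧ (∀ r s t, A.c r s t = A.c s r t) := by
  obtain ⟨he, hinv, -, -, -, -, hanti, -, -, -, -⟩ := hA
  have hsym : ∀ r, A.inv r = r := by
    intro r
    by_cases hr : r = A.e
    · rw [hr, he]
    · set T : Finset R := Finset.univ \ {A.e, r} with hT
      have hTcard : 2 ≤ T.card := by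
        have h2 : ({A.e, r} : Finset R).card ≤ 2 := by
          apply (Finset.card_insert_le _ _).trans; simp
        rw [hT, Finset.card_sdiff_of_subset (Finset.subset_univ _), Finset.card_univ]
        omega
      have hmemT : ∀ x : R, x ∈ T ↔ x ≠ A.e ∧ x ≠ r := by
        intro x; simp [hT]
      set π : Finset (Finset R) := {{A.e}, {r}, T} with hπ
      have hmemπ : ∀ S : Finset R, S ∈ π ↔ S = {A.e} ∨ S = {r} ∨ S = T := by
        intro S; simp [hπ]
      have hpart : IsPartition π := by
        constructor
        · intro S hS
          rcases (hmemπ S).1 hS with h | h | h <;> subst h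
          · exact Finset.singleton_nonempty _
          · exact Finset.singleton_nonempty _
          · exact Finset.card_pos.mp (by omega)
        · intro x
          by_cases hx : x = A.e
          · refine ⟨{A.e}, ⟨(hmemπ _).2 (Or.inl rfl), by simp [hx]⟩, ?_⟩
            rintro S ⟨hS, hxS⟩
            rcases (hmemπ S).1 hS with h | h | h <;> subst h
            · rfl
            · simp only [Finset.mem_singleton] at hxS; rw [hxS] at hx
              exact absurd hx hr
            · exact absurd ((hmemT x).1 hxS).1 (by simp [hx])
          · by_cases hx' : x = r
            · refine ⟨{r}, ⟨(hmemπ _).2 (Or.inr (Or.inl rfl)), by simp [hx']⟩, ?_⟩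
              rintro S ⟨hS, hxS⟩
              rcases (hmemπ S).1 hS with h | h | h <;> subst h
              · simp only [Finset.mem_singleton] at hxS; exact absurd hxS hx
              · rfl
              · exact absurd ((hmemT x).1 hxS).2 (by simp [hx'])
            · refine ⟨T, ⟨(hmemπ _).2 (Or.inr (Or.inr rfl)), (hmemT x).2 ⟨hx, hx'⟩⟩, ?_⟩
              rintro S ⟨hS, hxS⟩
              rcases (hmemπ S).1 hS with h | h | h <;> subst h
              · simp only [Finset.mem_singleton] at hxS; exact absurd hxS hx
              · simp only [Finset.mem_singleton] at hxS; exact absurd hxS hx'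
              · rfl
      obtain ⟨hclosed, -⟩ := ham π hpart ((hmemπ _).2 (Or.inl rfl))
      have himg : ({r} : Finset R).image A.inv ∈ π :=
        hclosed {r} ((hmemπ _).2 (Or.inr (Or.inl rfl)))
      rw [Finset.image_singleton] at himg
      rcases (hmemπ _).1 himg with h | h | h
      · exfalso
        have : A.inv r = A.e := Finset.singleton_injective h
        have : r = A.e := by rw [← hinv r, this, he]
        exact hr this
      · exact Finset.singleton_injective h
      · exfalso
        have := congrArg Finset.card h
        rw [Finset.card_singleton] at this
        omega
  refine ⟨hsym, fun r s t => ?_⟩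
  have h := hanti r s t
  rwa [hsym, hsym, hsym] at h
end

section
/- Let (R, e, *, d, c) be a symmetric C-algebra. Then it is amorphic if and only if for all r, s ∈ R^# (not necessarily distinct) and all u, v ∈ R^# \ {r, s}, one has c_{r,s}^u = c_{r,s}^v. -/
open Finset

private lemma sum_split2 {R : Type*} [DecidableEq R] (s : Finset R) (u v : R)
    (hu : u ∈ s) (hv : v ∈ s) (huv : u ≠ v) (f : R → ℝ) :
    ∑ x ∈ s, f x = f u + f v + ∑ x ∈ s \ {u, v}, f x := by
  have hsub : ({u, v} : Finset R) ⊆ s :=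
    Finset.insert_subset hu (Finset.singleton_subset_iff.mpr hv)
  rw [← Finset.sum_sdiff hsub, Finset.sum_pair huv]
  ring

private lemma sum_split3 {R : Type*} [Fintype R] [DecidableEq R] (f : R → ℝ) (a b c : R)
    (hab : a ≠ b) (hac : a ≠ c) (hbc : b ≠ c) :
    ∑ x, f x = f a + f b + f c + ∑ x ∈ Finset.univ \ {a, b, c}, f x := by
  have hsub : ({a, b, c} : Finset R) ⊆ Finset.univ := Finset.subset_univ _
  rw [← Finset.sum_sdiff hsub, Finset.sum_insert (by simp [hab, hac]),
    Finset.sum_insert (by simp [hbc]), Finset.sum_singleton]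
  ring

/-- a symmetric `C`-algebra is amorphic iff `c_{r,s}^u = c_{r,s}^v` for all
`r, s ∈ R^#` and all `u, v ∈ R^# \ {r, s}`. -/
theorem stmt_3 {R : Type*} [Fintype R] [DecidableEq R] (A : CAlgebraData R)
    (hA : IsCAlgebra A) (hsym : ∀ r, A.inv r = r) :
    IsAmorphic A ↔
      ∀ r s u v, r ≠ A.e → s ≠ A.e → u ≠ A.e → v ≠ A.e →
        u ≠ r → u ≠ s → v ≠ r → v ≠ s → A.c r s u = A.c r s v := by
  obtain ⟨hinve, hinvinv, hdpos, hce, hcre, hassoc, hanti, hc3, hde, hdinv, hc4⟩ := hA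
  have hce0 : ∀ r s, A.c r s A.e = if s = r then A.d r else 0 := by
    intro r s; rw [hc3, hsym]
  have hcomm : ∀ r s t, A.c r s t = A.c s r t := by
    intro r s t; rw [hanti r s t]; simp [hsym]
  have hstar : ∀ r s t, A.d t * A.c r s t = A.d r * A.c s t r := by
    intro r s t
    have h := hassoc r s t A.e
    simp only [hce0] at h
    simp only [mul_ite, mul_zero, ite_mul, zero_mul] at h
    rw [Finset.sum_ite_eq, Finset.sum_ite_eq'] at h
    simp only [Finset.mem_univ, if_true] at h
    linarith
  have hdne : ∀ r : R, A.d r ≠ 0 := fun r => ne_of_gt (hdpos r)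
  constructor
  · -- amorphic → condition
    intro hAm
    intro r s u v hr hs hu hv hur hus hvr hvs
    classical
    set C : Finset R := Finset.univ \ {A.e, r, s} with hC
    have huC : u ∈ C := by simp [hC, hu, hur, hus]
    have hvC : v ∈ C := by simp [hC, hv, hvr, hvs]
    set π : Finset (Finset R) := {{A.e}, {r}, {s}, C} with hπ
    have hmem : ∀ X ∈ π, X = {A.e} ∨ X = {r} ∨ X = {s} ∨ X = C := by
      intro X hX; simpa [hπ] using hX
    have hclass : ∀ x : R, ∃! X, X ∈ π ∧ x ∈ X := by
      intro x
      by_cases hxe : x = A.e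
      · subst hxe
        refine ⟨{A.e}, ⟨by simp [hπ], Finset.mem_singleton_self _⟩, ?_⟩
        rintro Y ⟨hY, hxY⟩
        rcases hmem Y hY with rfl | rfl | rfl | rfl
        · rfl
        · simp only [Finset.mem_singleton] at hxY; exact absurd hxY.symm hr
        · simp only [Finset.mem_singleton] at hxY; exact absurd hxY.symm hs
        · simp [hC] at hxY
      · by_cases hxr : x = r
        · subst hxr
          refine ⟨{x}, ⟨by simp [hπ], Finset.mem_singleton_self _⟩, ?_⟩
          rintro Y ⟨hY, hxY⟩
          rcases hmem Y hY with rfl | rfl | rfl | rfl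
          · simp only [Finset.mem_singleton] at hxY; exact absurd hxY hxe
          · rfl
          · simp only [Finset.mem_singleton] at hxY; rw [hxY]
          · simp [hC] at hxY
        · by_cases hxs : x = s
          · subst hxs
            refine ⟨{x}, ⟨by simp [hπ], Finset.mem_singleton_self _⟩, ?_⟩
            rintro Y ⟨hY, hxY⟩
            rcases hmem Y hY with rfl | rfl | rfl | rfl
            · simp only [Finset.mem_singleton] at hxY; exact absurd hxY hxe
            · simp only [Finset.mem_singleton] at hxY; rw [hxY]
            · rfl
            · simp [hC] at hxY
          · refine ⟨C, ⟨by simp [hπ], by simp [hC, hxe, hxr, hxs]⟩, ?_⟩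
            rintro Y ⟨hY, hxY⟩
            rcases hmem Y hY with rfl | rfl | rfl | rfl
            · simp only [Finset.mem_singleton] at hxY; exact absurd hxY hxe
            · simp only [Finset.mem_singleton] at hxY; exact absurd hxY hxr
            · simp only [Finset.mem_singleton] at hxY; exact absurd hxY hxs
            · rfl
    have hpart : IsPartition π := by
      refine ⟨fun S hS => ?_, hclass⟩
      rcases hmem S hS with rfl | rfl | rfl | rfl
      · exact Finset.singleton_nonempty _
      · exact Finset.singleton_nonempty _
      · exact Finset.singleton_nonempty _
      · exact ⟨u, huC⟩
    obtain ⟨-, h2⟩ := hAm π hpart (by simp [hπ])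
    have h := h2 {r} (by simp [hπ]) {s} (by simp [hπ]) C (by simp [hπ]) u huC v hvC
    simpa using h
  · -- condition → amorphic
    intro H π hπ heπ
    have huniq : ∀ X ∈ π, ∀ Y ∈ π, ∀ x : R, x ∈ X → x ∈ Y → X = Y := by
      intro X hX Y hY x hxX hxY
      obtain ⟨Z, _, hZu⟩ := hπ.2 x
      rw [hZu X ⟨hX, hxX⟩, hZu Y ⟨hY, hxY⟩]
    constructor
    · intro S hS
      have himg : S.image A.inv = S := by
        ext x; simp [hsym]
      rwa [himg]
    intro S hS T hT U hU u hu v hv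
    by_cases huv : u = v
    · rw [huv]
    have hUe : U ≠ {A.e} := by
      intro h
      rw [h] at hu hv
      simp only [Finset.mem_singleton] at hu hv
      exact huv (hu.trans hv.symm)
    have hnotE : ∀ x ∈ U, x ≠ A.e := by
      intro x hx hxe
      exact hUe (huniq U hU {A.e} heπ x hx (by simp [hxe]))
    have hue := hnotE u hu
    have hve := hnotE v hv
    -- the two key identities
    have key1 : ∀ s, s ≠ A.e → s ≠ u → s ≠ v →
        A.c u s u + A.c v s u = A.c u s v + A.c v s v := by
      intro s hse hsu hsv
      -- sum identity for (u, s)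
      have h1 := hc4 u s
      rw [sum_split3 (fun t => A.d t * A.c u s t) A.e u s (Ne.symm hue) (Ne.symm hse)
          (fun h => hsu h.symm)] at h1
      have hz1 : A.c u s A.e = 0 := by rw [hce0]; exact if_neg hsu
      have hGus : ∑ t ∈ Finset.univ \ {A.e, u, s}, A.d t
          = (∑ t, A.d t) - 1 - A.d u - A.d s := by
        have h := sum_split3 A.d A.e u s (Ne.symm hue) (Ne.symm hse) (fun h => hsu h.symm)
        rw [hde] at h; linarith
      have hrest1 : ∑ t ∈ Finset.univ \ {A.e, u, s}, A.d t * A.c u s t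
          = ((∑ t, A.d t) - 1 - A.d u - A.d s) * A.c u s v := by
        rw [← hGus, Finset.sum_mul]
        refine Finset.sum_congr rfl fun t ht => ?_
        simp only [Finset.mem_sdiff, Finset.mem_univ, true_and, Finset.mem_insert,
          Finset.mem_singleton] at ht
        push_neg at ht
        rw [H u s t v hue hse ht.1 hve ht.2.1 ht.2.2 (Ne.symm huv) (Ne.symm hsv)]
      rw [hz1, hde, hstar u s s, hrest1] at h1
      -- sum identity for (v, s)
      have h2 := hc4 v s
      rw [sum_split3 (fun t => A.d t * A.c v s t) A.e v s (Ne.symm hve) (Ne.symm hse)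
          (fun h => hsv h.symm)] at h2
      have hz2 : A.c v s A.e = 0 := by rw [hce0]; exact if_neg hsv
      have hGvs : ∑ t ∈ Finset.univ \ {A.e, v, s}, A.d t
          = (∑ t, A.d t) - 1 - A.d v - A.d s := by
        have h := sum_split3 A.d A.e v s (Ne.symm hve) (Ne.symm hse) (fun h => hsv h.symm)
        rw [hde] at h; linarith
      have hrest2 : ∑ t ∈ Finset.univ \ {A.e, v, s}, A.d t * A.c v s t
          = ((∑ t, A.d t) - 1 - A.d v - A.d s) * A.c v s u := by
        rw [← hGvs, Finset.sum_mul]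
        refine Finset.sum_congr rfl fun t ht => ?_
        simp only [Finset.mem_sdiff, Finset.mem_univ, true_and, Finset.mem_insert,
          Finset.mem_singleton] at ht
        push_neg at ht
        rw [H v s t u hve hse ht.1 hue ht.2.1 ht.2.2 huv (Ne.symm hsu)]
      rw [hz2, hde, hstar v s s, hrest2] at h2
      have hmu : A.c s s u = A.c s s v :=
        H s s u v hse hse hue hve (Ne.symm hsu) (Ne.symm hsu) (Ne.symm hsv) (Ne.symm hsv)
      have hrho : A.d v * A.c u s v = A.d u * A.c v s u := by
        have h := hstar u s v
        rw [hcomm s v u] at h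
        exact h
      have hmain : (A.d u * A.d v) * (A.c u s u + A.c v s u)
          = (A.d u * A.d v) * (A.c u s v + A.c v s v) := by
        linear_combination (A.d v) * h1 - (A.d u) * h2 - (A.d u * A.d v) * hmu
          - ((∑ t, A.d t) - 1 - A.d s) * hrho
      exact mul_left_cancel₀ (mul_ne_zero (hdne u) (hdne v)) hmain
    have key2 : A.c u u u + 2 * A.c u v u + A.c v v u
        = A.c u u v + 2 * A.c u v v + A.c v v v := by
      have hGuv : ∑ t ∈ Finset.univ \ {A.e, u, v}, A.d t
          = (∑ t, A.d t) - 1 - A.d u - A.d v := by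
        have h := sum_split3 A.d A.e u v (Ne.symm hue) (Ne.symm hve) huv
        rw [hde] at h; linarith
      -- star relations
      have h4 : A.d u * A.c u v u = A.d v * A.c u u v := by
        rw [hcomm u v u]; exact hstar v u u
      have h5 : A.d v * A.c u v v = A.d u * A.c v v u := hstar u v v
      -- sum identity for (u, u)
      have h1 := hc4 u u
      rw [sum_split3 (fun t => A.d t * A.c u u t) A.e u v (Ne.symm hue) (Ne.symm hve) huv] at h1
      have hz1 : A.c u u A.e = A.d u := by rw [hce0]; exact if_pos rfl
      have hrest1 : ∑ t ∈ Finset.univ \ {A.e, u, v}, A.d t * A.c u u t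
          = ((∑ t, A.d t) - 1 - A.d u - A.d v) * A.c u u v := by
        rw [← hGuv, Finset.sum_mul]
        refine Finset.sum_congr rfl fun t ht => ?_
        simp only [Finset.mem_sdiff, Finset.mem_univ, true_and, Finset.mem_insert,
          Finset.mem_singleton] at ht
        push_neg at ht
        rw [H u u t v hue hue ht.1 hve ht.2.1 ht.2.1 (Ne.symm huv) (Ne.symm huv)]
      rw [hz1, hde, hrest1] at h1
      -- sum identity for (v, v)
      have h2 := hc4 v v
      rw [sum_split3 (fun t => A.d t * A.c v v t) A.e u v (Ne.symm hue) (Ne.symm hve) huv] at h2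
      have hz2 : A.c v v A.e = A.d v := by rw [hce0]; exact if_pos rfl
      have hrest2 : ∑ t ∈ Finset.univ \ {A.e, u, v}, A.d t * A.c v v t
          = ((∑ t, A.d t) - 1 - A.d u - A.d v) * A.c v v u := by
        rw [← hGuv, Finset.sum_mul]
        refine Finset.sum_congr rfl fun t ht => ?_
        simp only [Finset.mem_sdiff, Finset.mem_univ, true_and, Finset.mem_insert,
          Finset.mem_singleton] at ht
        push_neg at ht
        rw [H v v t u hve hve ht.1 hue ht.2.2 ht.2.2 huv huv]
      rw [hz2, hde, hrest2] at h2
      -- sum identity for (u, v)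
      have h3 := hc4 u v
      rw [sum_split3 (fun t => A.d t * A.c u v t) A.e u v (Ne.symm hue) (Ne.symm hve) huv] at h3
      have hz3 : A.c u v A.e = 0 := by rw [hce0]; exact if_neg (Ne.symm huv)
      rw [hz3, hde] at h3
      by_cases hex : ∃ t₀ : R, t₀ ≠ A.e ∧ t₀ ≠ u ∧ t₀ ≠ v
      · obtain ⟨t₀, hte, htu, htv⟩ := hex
        have hrest3 : ∑ t ∈ Finset.univ \ {A.e, u, v}, A.d t * A.c u v t
            = ((∑ t, A.d t) - 1 - A.d u - A.d v) * A.c u v t₀ := by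
          rw [← hGuv, Finset.sum_mul]
          refine Finset.sum_congr rfl fun t ht => ?_
          simp only [Finset.mem_sdiff, Finset.mem_univ, true_and, Finset.mem_insert,
            Finset.mem_singleton] at ht
          push_neg at ht
          rw [H u v t t₀ hue hve ht.1 hte ht.2.1 ht.2.2 htu htv]
        rw [hrest3] at h3
        -- Eq (u, t₀)
        have h6 := hc4 u t₀
        rw [sum_split3 (fun t => A.d t * A.c u t₀ t) A.e u t₀ (Ne.symm hue) (Ne.symm hte)
            (fun h => htu h.symm)] at h6
        have hz6 : A.c u t₀ A.e = 0 := by rw [hce0]; exact if_neg htu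
        have hGut : ∑ t ∈ Finset.univ \ {A.e, u, t₀}, A.d t
            = (∑ t, A.d t) - 1 - A.d u - A.d t₀ := by
          have h := sum_split3 A.d A.e u t₀ (Ne.symm hue) (Ne.symm hte) (fun h => htu h.symm)
          rw [hde] at h; linarith
        have hrest6 : ∑ t ∈ Finset.univ \ {A.e, u, t₀}, A.d t * A.c u t₀ t
            = ((∑ t, A.d t) - 1 - A.d u - A.d t₀) * A.c u t₀ v := by
          rw [← hGut, Finset.sum_mul]
          refine Finset.sum_congr rfl fun t ht => ?_
          simp only [Finset.mem_sdiff, Finset.mem_univ, true_and, Finset.mem_insert,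
            Finset.mem_singleton] at ht
          push_neg at ht
          rw [H u t₀ t v hue hte ht.1 hve ht.2.1 ht.2.2 (Ne.symm huv) (Ne.symm htv)]
        rw [hz6, hde, hrest6] at h6
        have h7 : A.d u * A.c u t₀ u = A.d t₀ * A.c u u t₀ := by
          rw [hcomm u t₀ u]; exact hstar t₀ u u
        have h7b : A.c u u t₀ = A.c u u v :=
          H u u t₀ v hue hue hte hve htu htu (Ne.symm huv) (Ne.symm huv)
        have h8 : A.d t₀ * A.c u t₀ t₀ = A.d u * A.c t₀ t₀ u := hstar u t₀ t₀
        have h9 : A.d v * A.c u t₀ v = A.d t₀ * A.c u v t₀ := by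
          have ha := hstar u t₀ v
          have hb := hstar u v t₀
          rw [hcomm t₀ v u] at ha
          exact ha.trans hb.symm
        -- Eq (v, t₀)
        have h10 := hc4 v t₀
        rw [sum_split3 (fun t => A.d t * A.c v t₀ t) A.e v t₀ (Ne.symm hve) (Ne.symm hte)
            (fun h => htv h.symm)] at h10
        have hz10 : A.c v t₀ A.e = 0 := by rw [hce0]; exact if_neg htv
        have hGvt : ∑ t ∈ Finset.univ \ {A.e, v, t₀}, A.d t
            = (∑ t, A.d t) - 1 - A.d v - A.d t₀ := by
          have h := sum_split3 A.d A.e v t₀ (Ne.symm hve) (Ne.symm hte) (fun h => htv h.symm)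
          rw [hde] at h; linarith
        have hrest10 : ∑ t ∈ Finset.univ \ {A.e, v, t₀}, A.d t * A.c v t₀ t
            = ((∑ t, A.d t) - 1 - A.d v - A.d t₀) * A.c v t₀ u := by
          rw [← hGvt, Finset.sum_mul]
          refine Finset.sum_congr rfl fun t ht => ?_
          simp only [Finset.mem_sdiff, Finset.mem_univ, true_and, Finset.mem_insert,
            Finset.mem_singleton] at ht
          push_neg at ht
          rw [H v t₀ t u hve hte ht.1 hue ht.2.1 ht.2.2 huv (Ne.symm htu)]
        rw [hz10, hde, hrest10] at h10
        have h11 : A.d v * A.c v t₀ v = A.d t₀ * A.c v v t₀ := by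
          rw [hcomm v t₀ v]; exact hstar t₀ v v
        have h11b : A.c v v t₀ = A.c v v u :=
          H v v t₀ u hve hve hte hue htv htv huv huv
        have h12 : A.d t₀ * A.c v t₀ t₀ = A.d v * A.c t₀ t₀ v := hstar v t₀ t₀
        have hmub : A.c t₀ t₀ u = A.c t₀ t₀ v :=
          H t₀ t₀ u v hte hte hue hve (Ne.symm htu) (Ne.symm htu) (Ne.symm htv) (Ne.symm htv)
        have h13 : A.d u * A.c v t₀ u = A.d t₀ * A.c u v t₀ := by
          have ha := hstar v t₀ u
          have hb := hstar v u t₀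
          rw [hcomm t₀ u v] at ha
          rw [hcomm v u t₀] at hb
          exact ha.trans hb.symm
        have EqU : A.d v * A.d t₀ * A.c u u v + A.d u * A.d v * A.c t₀ t₀ u
            + ((∑ t, A.d t) - 1 - A.d u - A.d t₀) * A.d t₀ * A.c u v t₀
            = A.d u * A.d v * A.d t₀ := by
          linear_combination A.d v * h6 - A.d v * h7 - A.d v * A.d t₀ * h7b - A.d v * h8
            - ((∑ t, A.d t) - 1 - A.d u - A.d t₀) * h9
        have EqV : A.d u * A.d t₀ * A.c v v u + A.d u * A.d v * A.c t₀ t₀ u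
            + ((∑ t, A.d t) - 1 - A.d v - A.d t₀) * A.d t₀ * A.c u v t₀
            = A.d u * A.d v * A.d t₀ := by
          linear_combination A.d u * h10 - A.d u * h11 - A.d u * A.d t₀ * h11b - A.d u * h12
            + A.d u * A.d v * hmub - ((∑ t, A.d t) - 1 - A.d v - A.d t₀) * h13
        have hab' : A.d t₀ * (A.d v * A.c u u v - A.d u * A.c v v u)
            = A.d t₀ * ((A.d u - A.d v) * A.c u v t₀) := by
          linear_combination EqU - EqV
        have hab := mul_left_cancel₀ (hdne t₀) hab'
        have hmain : (A.d u * A.d v) * (A.c u u u + 2 * A.c u v u + A.c v v u)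
            = (A.d u * A.d v) * (A.c u u v + 2 * A.c u v v + A.c v v v) := by
          linear_combination A.d v * h1 - A.d u * h2 + (A.d v - A.d u) * h3
            + (A.d u + A.d v) * h4 - (A.d u + A.d v) * h5
            - ((∑ t, A.d t) - 1 - A.d u - A.d v) * hab
        exact mul_left_cancel₀ (mul_ne_zero (hdne u) (hdne v)) hmain
      · push_neg at hex
        have hempty : Finset.univ \ ({A.e, u, v} : Finset R) = ∅ := by
          ext t
          simp only [Finset.mem_sdiff, Finset.mem_univ, true_and, Finset.mem_insert,
            Finset.mem_singleton, Finset.notMem_empty, iff_false]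
          push_neg
          by_cases h1' : t = A.e
          · exact Or.inl h1'
          by_cases h2' : t = u
          · exact Or.inr (Or.inl h2')
          exact Or.inr (Or.inr (hex t h1' h2'))
        have hK : (∑ t, A.d t) = 1 + A.d u + A.d v := by
          have h := sum_split3 A.d A.e u v (Ne.symm hue) (Ne.symm hve) huv
          rw [hempty, Finset.sum_empty, hde] at h; linarith
        rw [hempty, Finset.sum_empty] at h3
        have hmain : (A.d u * A.d v) * (A.c u u u + 2 * A.c u v u + A.c v v u)
            = (A.d u * A.d v) * (A.c u u v + 2 * A.c u v v + A.c v v v) := by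
          linear_combination A.d v * h1 - A.d u * h2 + (A.d v - A.d u) * h3
            + (A.d u + A.d v) * h4 - (A.d u + A.d v) * h5
            + (A.d u * A.c v v u - A.d v * A.c u u v) * hK
        exact mul_left_cancel₀ (mul_ne_zero (hdne u) (hdne v)) hmain
    -- dispatch the cases where S or T is the trivial class
    by_cases hSe : S = {A.e}
    · rw [hSe, Finset.sum_singleton, Finset.sum_singleton]
      simp only [hce]
      rw [Finset.sum_ite_eq' T u (fun _ => (1 : ℝ)),
        Finset.sum_ite_eq' T v (fun _ => (1 : ℝ))]
      have hTiff : u ∈ T ↔ v ∈ T := by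
        constructor
        · intro h; rw [huniq T hT U hU u h hu]; exact hv
        · intro h; rw [huniq T hT U hU v h hv]; exact hu
      exact if_congr hTiff rfl rfl
    by_cases hTe : T = {A.e}
    · rw [hTe]
      simp only [Finset.sum_singleton, hcre]
      rw [Finset.sum_ite_eq' S u (fun _ => (1 : ℝ)),
        Finset.sum_ite_eq' S v (fun _ => (1 : ℝ))]
      have hSiff : u ∈ S ↔ v ∈ S := by
        constructor
        · intro h; rw [huniq S hS U hU u h hu]; exact hv
        · intro h; rw [huniq S hS U hU v h hv]; exact hu
      exact if_congr hSiff rfl rfl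
    have hSne : ∀ x ∈ S, x ≠ A.e := by
      intro x hx hxe
      exact hSe (huniq S hS {A.e} heπ x hx (by simp [hxe]))
    have hTne : ∀ x ∈ T, x ≠ A.e := by
      intro x hx hxe
      exact hTe (huniq T hT {A.e} heπ x hx (by simp [hxe]))
    have hSiff : u ∈ S ↔ v ∈ S := by
      constructor
      · intro h; rw [huniq S hS U hU u h hu]; exact hv
      · intro h; rw [huniq S hS U hU v h hv]; exact hu
    have hTiff : u ∈ T ↔ v ∈ T := by
      constructor
      · intro h; rw [huniq T hT U hU u h hu]; exact hv
      · intro h; rw [huniq T hT U hU v h hv]; exact hu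
    have hinner_pair : ∑ s ∈ T, (A.c u s u + A.c v s u)
        = ∑ s ∈ T, (A.c u s v + A.c v s v) := by
      by_cases hut : u ∈ T
      · have hvT : v ∈ T := hTiff.mp hut
        rw [sum_split2 T u v hut hvT huv (fun s => A.c u s u + A.c v s u),
          sum_split2 T u v hut hvT huv (fun s => A.c u s v + A.c v s v)]
        have hcongr : ∑ s ∈ T \ {u, v}, (A.c u s u + A.c v s u)
            = ∑ s ∈ T \ {u, v}, (A.c u s v + A.c v s v) := by
          refine Finset.sum_congr rfl fun s hs => ?_
          simp only [Finset.mem_sdiff, Finset.mem_insert, Finset.mem_singleton] at hs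
          push_neg at hs
          exact key1 s (hTne s hs.1) hs.2.1 hs.2.2
        rw [hcongr]
        have e1 : A.c v u u = A.c u v u := hcomm v u u
        have e2 : A.c v u v = A.c u v v := hcomm v u v
        linarith [key2]
      · have hvT : v ∉ T := fun h => hut (hTiff.mpr h)
        refine Finset.sum_congr rfl fun s hs => ?_
        exact key1 s (hTne s hs) (fun h => hut (h ▸ hs)) (fun h => hvT (h ▸ hs))
    have hinner_row : ∀ r, r ≠ A.e → r ≠ u → r ≠ v →
        ∑ s ∈ T, A.c r s u = ∑ s ∈ T, A.c r s v := by
      intro r hre hru hrv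
      by_cases hut : u ∈ T
      · have hvT : v ∈ T := hTiff.mp hut
        rw [sum_split2 T u v hut hvT huv (fun s => A.c r s u),
          sum_split2 T u v hut hvT huv (fun s => A.c r s v)]
        have hcongr : ∑ s ∈ T \ {u, v}, A.c r s u = ∑ s ∈ T \ {u, v}, A.c r s v := by
          refine Finset.sum_congr rfl fun s hs => ?_
          simp only [Finset.mem_sdiff, Finset.mem_insert, Finset.mem_singleton] at hs
          push_neg at hs
          exact H r s u v hre (hTne s hs.1) hue hve (Ne.symm hru)
            (fun h => hs.2.1 h.symm) (Ne.symm hrv) (fun h => hs.2.2 h.symm)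
        rw [hcongr]
        have e1 : A.c r u u = A.c u r u := hcomm r u u
        have e2 : A.c r v u = A.c v r u := hcomm r v u
        have e3 : A.c r u v = A.c u r v := hcomm r u v
        have e4 : A.c r v v = A.c v r v := hcomm r v v
        have := key1 r hre hru hrv
        linarith
      · have hvT : v ∉ T := fun h => hut (hTiff.mpr h)
        refine Finset.sum_congr rfl fun s hs => ?_
        exact H r s u v hre (hTne s hs) hue hve (Ne.symm hru)
          (fun h => hut (h ▸ hs)) (Ne.symm hrv) (fun h => hvT (h ▸ hs))
    by_cases hus : u ∈ S
    · have hvS : v ∈ S := hSiff.mp hus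
      rw [sum_split2 S u v hus hvS huv (fun r => ∑ s ∈ T, A.c r s u),
        sum_split2 S u v hus hvS huv (fun r => ∑ s ∈ T, A.c r s v)]
      have hcongr : ∑ r ∈ S \ {u, v}, ∑ s ∈ T, A.c r s u
          = ∑ r ∈ S \ {u, v}, ∑ s ∈ T, A.c r s v := by
        refine Finset.sum_congr rfl fun r hr => ?_
        simp only [Finset.mem_sdiff, Finset.mem_insert, Finset.mem_singleton] at hr
        push_neg at hr
        exact hinner_row r (hSne r hr.1) hr.2.1 hr.2.2
      rw [hcongr]
      have e1 : ∑ s ∈ T, A.c u s u + ∑ s ∈ T, A.c v s u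
          = ∑ s ∈ T, (A.c u s u + A.c v s u) := Finset.sum_add_distrib.symm
      have e2 : ∑ s ∈ T, A.c u s v + ∑ s ∈ T, A.c v s v
          = ∑ s ∈ T, (A.c u s v + A.c v s v) := Finset.sum_add_distrib.symm
      linarith [hinner_pair]
    · have hvS : v ∉ S := fun h => hus (hSiff.mpr h)
      refine Finset.sum_congr rfl fun r hr => ?_
      exact hinner_row r (hSne r hr) (fun h => hus (h ▸ hr)) (fun h => hvS (h ▸ hr))
end

section
/- Let (R, e, *, d, c) be a nontrivial amorphic C-algebra of degree n. Then there exists ε ∈ {−1, 1} with √n + ε > 0 such that for all r, s, t ∈ R^#, writing d'_r = n − 1 − d_r: (i) if r, s, t are pairwise distinct then c_{r,s}^t = d_r d_s / (√n + ε)²; (ii) if t ≠ r then c_{r,r}^t = (d_r/2)·(1 + (d_r − d'_r)/(√n + ε)²); (iii) c_{r,r}^r = −(d'_r/2)·(1 + (d_r − d'_r)/(√n + ε)²) + d_r − 1. In particular, the structure constants are uniquely determined by the multiset of degrees {d_r : r ∈ R} and the number ε. -/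
open Finset

set_option linter.unusedSectionVars false
set_option linter.unusedVariables false
set_option maxHeartbeats 1000000

section aux
variable {R : Type*} [Fintype R] [DecidableEq R]

lemma split1 (s : Finset R) (f : R → ℝ) {a : R} (ha : a ∈ s) :
    ∑ v ∈ s, f v = f a + ∑ v ∈ s \ {a}, f v := by
  rw [← Finset.sum_sdiff (show ({a} : Finset R) ⊆ s by simp [ha]), Finset.sum_singleton]
  ring

lemma split2 (s : Finset R) (f : R → ℝ) {a b : R} (ha : a ∈ s) (hb : b ∈ s) (hab : a ≠ b) :
    ∑ v ∈ s, f v = f a + f b + ∑ v ∈ s \ {a, b}, f v := by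
  rw [← Finset.sum_sdiff (show ({a, b} : Finset R) ⊆ s by simp [insert_subset_iff, ha, hb]),
    Finset.sum_insert (by simp [hab]), Finset.sum_singleton]
  ring

lemma split3 (s : Finset R) (f : R → ℝ) {a b c : R} (ha : a ∈ s) (hb : b ∈ s) (hc : c ∈ s)
    (hab : a ≠ b) (hac : a ≠ c) (hbc : b ≠ c) :
    ∑ v ∈ s, f v = f a + f b + f c + ∑ v ∈ s \ {a, b, c}, f v := by
  rw [← Finset.sum_sdiff (show ({a, b, c} : Finset R) ⊆ s by
      simp [insert_subset_iff, ha, hb, hc]),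
    Finset.sum_insert (by simp [hab, hac]), Finset.sum_insert (by simp [hbc]),
    Finset.sum_singleton]
  ring

lemma split4 (s : Finset R) (f : R → ℝ) {a b c d : R} (ha : a ∈ s) (hb : b ∈ s) (hc : c ∈ s)
    (hd : d ∈ s) (hab : a ≠ b) (hac : a ≠ c) (had : a ≠ d) (hbc : b ≠ c) (hbd : b ≠ d)
    (hcd : c ≠ d) :
    ∑ v ∈ s, f v = f a + f b + f c + f d + ∑ v ∈ s \ {a, b, c, d}, f v := by
  rw [← Finset.sum_sdiff (show ({a, b, c, d} : Finset R) ⊆ s by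
      simp [insert_subset_iff, ha, hb, hc, hd]),
    Finset.sum_insert (by simp [hab, hac, had]), Finset.sum_insert (by simp [hbc, hbd]),
    Finset.sum_insert (by simp [hcd]), Finset.sum_singleton]
  ring

lemma part3 {e r : R} (her : e ≠ r) (hcard : 3 ≤ Fintype.card R) :
    IsPartition ({ {e}, {r}, univ \ {e, r} } : Finset (Finset R)) := by
  have hdcard : 1 ≤ (univ \ ({e, r} : Finset R)).card := by
    rw [Finset.card_sdiff_of_subset (subset_univ _), Finset.card_univ]
    have : ({e, r} : Finset R).card ≤ 2 := (Finset.card_insert_le _ _).trans (by simp)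
    omega
  constructor
  · intro S hS
    simp only [mem_insert, mem_singleton] at hS
    rcases hS with rfl | rfl | rfl
    · exact singleton_nonempty _
    · exact singleton_nonempty _
    · exact Finset.card_pos.mp (by omega)
  · intro x
    by_cases hxe : x = e
    · subst hxe
      refine ⟨{x}, ⟨by simp, by simp⟩, ?_⟩
      rintro T ⟨hT, hxT⟩
      simp only [mem_insert, mem_singleton] at hT
      rcases hT with rfl | rfl | rfl
      · rfl
      · simp only [mem_singleton] at hxT; exact absurd hxT her
      · simp at hxT
    by_cases hxr : x = r
    · subst hxr
      refine ⟨{x}, ⟨by simp, by simp⟩, ?_⟩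
      rintro T ⟨hT, hxT⟩
      simp only [mem_insert, mem_singleton] at hT
      rcases hT with rfl | rfl | rfl
      · simp only [mem_singleton] at hxT; exact absurd hxT.symm her
      · rfl
      · simp at hxT
    · refine ⟨univ \ {e, r}, ⟨by simp, by simp [hxe, hxr]⟩, ?_⟩
      rintro T ⟨hT, hxT⟩
      simp only [mem_insert, mem_singleton] at hT
      rcases hT with rfl | rfl | rfl
      · simp only [mem_singleton] at hxT; exact absurd hxT hxe
      · simp only [mem_singleton] at hxT; exact absurd hxT hxr
      · rfl

lemma part_pair {e u v : R} (heu : e ≠ u) (hev : e ≠ v) (huv : u ≠ v) :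
    IsPartition (insert {e} (insert {u, v}
      ((univ \ {e, u, v}).image fun x => ({x} : Finset R)))) := by
  constructor
  · intro S hS
    simp only [mem_insert, mem_image, mem_sdiff, mem_univ, true_and] at hS
    rcases hS with rfl | rfl | ⟨x, _, rfl⟩
    · exact singleton_nonempty _
    · exact insert_nonempty _ _
    · exact singleton_nonempty _
  · intro x
    by_cases hxe : x = e
    · subst hxe
      refine ⟨{x}, ⟨by simp, by simp⟩, ?_⟩
      rintro T ⟨hT, hxT⟩
      simp only [mem_insert, mem_image, mem_sdiff, mem_univ, true_and] at hT
      rcases hT with rfl | rfl | ⟨y, hy, rfl⟩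
      · rfl
      · simp only [mem_insert, mem_singleton] at hxT
        rcases hxT with h | h
        · exact absurd h.symm heu.symm
        · exact absurd h.symm hev.symm
      · simp only [mem_singleton] at hxT
        simp only [mem_insert, mem_singleton, not_or] at hy
        exact absurd hxT.symm hy.1
    by_cases hxuv : x = u ∨ x = v
    · refine ⟨{u, v}, ⟨by simp, by simp [hxuv]⟩, ?_⟩
      rintro T ⟨hT, hxT⟩
      simp only [mem_insert, mem_image, mem_sdiff, mem_univ, true_and] at hT
      rcases hT with rfl | rfl | ⟨y, hy, rfl⟩
      · simp only [mem_singleton] at hxT; exact absurd hxT hxe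
      · rfl
      · simp only [mem_singleton] at hxT
        simp only [mem_insert, mem_singleton, not_or] at hy
        subst hxT
        rcases hxuv with h | h
        · exact absurd h hy.2.1
        · exact absurd h hy.2.2
    · push_neg at hxuv
      refine ⟨{x}, ⟨?_, by simp⟩, ?_⟩
      · simp only [mem_insert, mem_image, mem_sdiff, mem_univ, true_and]
        exact Or.inr (Or.inr ⟨x, by simp [hxe, hxuv.1, hxuv.2], rfl⟩)
      rintro T ⟨hT, hxT⟩
      simp only [mem_insert, mem_image, mem_sdiff, mem_univ, true_and] at hT
      rcases hT with rfl | rfl | ⟨y, hy, rfl⟩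
      · simp only [mem_singleton] at hxT; exact absurd hxT hxe
      · simp only [mem_insert, mem_singleton] at hxT
        rcases hxT with h | h
        · exact absurd h hxuv.1
        · exact absurd h hxuv.2
      · simp only [mem_singleton] at hxT; rw [hxT]

end aux

/-- the structure constants of a nontrivial amorphic `C`-algebra are given by
explicit formulas in terms of the degrees and a number `ε = ±1`. -/
theorem stmt_4 {R : Type*} [Fintype R] [DecidableEq R] (A : CAlgebraData R)
    (hA : IsCAlgebra A) (hnt : 4 ≤ Fintype.card R) (ham : IsAmorphic A) :
    ∃ ε : ℝ, (ε = -1 ∨ ε = 1) ∧ 0 < Real.sqrt A.degree + ε ∧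
      (∀ r s t, r ≠ A.e → s ≠ A.e → t ≠ A.e → r ≠ s → s ≠ t → r ≠ t →
        A.c r s t = A.d r * A.d s / (Real.sqrt A.degree + ε) ^ 2) ∧
      (∀ r t, r ≠ A.e → t ≠ A.e → t ≠ r →
        A.c r r t = A.d r / 2 *
          (1 + (A.d r - (A.degree - 1 - A.d r)) / (Real.sqrt A.degree + ε) ^ 2)) ∧
      (∀ r, r ≠ A.e →
        A.c r r r = -((A.degree - 1 - A.d r) / 2) *
          (1 + (A.d r - (A.degree - 1 - A.d r)) / (Real.sqrt A.degree + ε) ^ 2)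
          + A.d r - 1) := by
  obtain ⟨hinvE, hinvinv, hdpos, hcE, hcE', hassoc, hanti, hcToE, hdE, hdinv, hsum⟩ := hA
  -- a witness distinct from any three given elements
  have hwit : ∀ a b c : R, ∃ w : R, w ≠ a ∧ w ≠ b ∧ w ≠ c := by
    intro a b c
    by_contra h
    push_neg at h
    have hsub : (univ : Finset R) ⊆ {a, b, c} := by
      intro x _
      simp only [mem_insert, mem_singleton]
      by_cases h1 : x = a
      · exact Or.inl h1
      by_cases h2 : x = b
      · exact Or.inr (Or.inl h2)
      · exact Or.inr (Or.inr (h x h1 h2))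
    have h1 := Finset.card_le_card hsub
    have h2 : ({a, b, c} : Finset R).card ≤ 3 :=
      (Finset.card_insert_le _ _).trans (by
        have := Finset.card_insert_le b ({c} : Finset R); simp at this ⊢; omega)
    rw [Finset.card_univ] at h1
    omega
  -- the involution is the identity
  have hinv : ∀ r, A.inv r = r := by
    intro r
    by_cases hre : r = A.e
    · rw [hre, hinvE]
    have hP := part3 (e := A.e) (r := r) (Ne.symm hre) (by omega)
    have hmem : ({A.e} : Finset R) ∈ ({ {A.e}, {r}, univ \ {A.e, r} } : Finset (Finset R)) := by
      simp
    have him := (ham _ hP hmem).1 {r} (by simp)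
    rw [Finset.image_singleton] at him
    simp only [mem_insert, mem_singleton] at him
    rcases him with h | h | h
    · exfalso
      have : A.inv r = A.e := by rwa [Finset.singleton_inj] at h
      have := congrArg A.inv this
      rw [hinvinv, hinvE] at this
      exact hre this
    · rwa [Finset.singleton_inj] at h
    · exfalso
      have hcard := congrArg Finset.card h
      rw [Finset.card_singleton, Finset.card_sdiff_of_subset (subset_univ _), Finset.card_univ] at hcard
      have h2 : ({A.e, r} : Finset R).card = 2 := by
        rw [Finset.card_insert_of_notMem (by simp [Ne.symm hre]), Finset.card_singleton]
      omega
  -- commutativity and basic structure constants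
  have hcomm : ∀ r s t, A.c r s t = A.c s r t := by
    intro r s t
    rw [hanti r s t, hinv, hinv, hinv]
  have hc0 : ∀ r s, A.c r s A.e = if s = r then A.d r else 0 := by
    intro r s
    rw [hcToE, hinv]
  -- key constancy facts from the pair partitions
  have hkey1 : ∀ u v r s : R, u ≠ A.e → v ≠ A.e → u ≠ v →
      r ≠ A.e → r ≠ u → r ≠ v → s ≠ A.e → s ≠ u → s ≠ v →
      A.c r s u = A.c r s v := by
    intro u v r s hue hve huv hre hru hrv hse hsu hsv
    have hP := part_pair (e := A.e) (u := u) (v := v) (Ne.symm hue) (Ne.symm hve) huv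
    have hmem : ({A.e} : Finset R) ∈ insert ({A.e} : Finset R) (insert {u, v}
        ((univ \ {A.e, u, v}).image fun x => ({x} : Finset R))) := by simp
    have h2 := (ham _ hP hmem).2 {r} ?_ {s} ?_ {u, v} (by simp) u (by simp) v (by simp)
    · simpa using h2
    · simp only [mem_insert, mem_image, mem_sdiff, mem_univ, true_and]
      exact Or.inr (Or.inr ⟨r, by simp [hre, hru, hrv], rfl⟩)
    · simp only [mem_insert, mem_image, mem_sdiff, mem_univ, true_and]
      exact Or.inr (Or.inr ⟨s, by simp [hse, hsu, hsv], rfl⟩)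
  have hkey2 : ∀ u v r : R, u ≠ A.e → v ≠ A.e → u ≠ v →
      r ≠ A.e → r ≠ u → r ≠ v →
      A.c r u u + A.c r v u = A.c r u v + A.c r v v := by
    intro u v r hue hve huv hre hru hrv
    have hP := part_pair (e := A.e) (u := u) (v := v) (Ne.symm hue) (Ne.symm hve) huv
    have hmem : ({A.e} : Finset R) ∈ insert ({A.e} : Finset R) (insert {u, v}
        ((univ \ {A.e, u, v}).image fun x => ({x} : Finset R))) := by simp
    have h2 := (ham _ hP hmem).2 {r} ?_ {u, v} (by simp) {u, v} (by simp) u (by simp) v (by simp)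
    · simpa [Finset.sum_pair huv] using h2
    · simp only [mem_insert, mem_image, mem_sdiff, mem_univ, true_and]
      exact Or.inr (Or.inr ⟨r, by simp [hre, hru, hrv], rfl⟩)
  have hkey3 : ∀ u v : R, u ≠ A.e → v ≠ A.e → u ≠ v →
      A.c u u u + A.c u v u + A.c v u u + A.c v v u
        = A.c u u v + A.c u v v + A.c v u v + A.c v v v := by
    intro u v hue hve huv
    have hP := part_pair (e := A.e) (u := u) (v := v) (Ne.symm hue) (Ne.symm hve) huv
    have hmem : ({A.e} : Finset R) ∈ insert ({A.e} : Finset R) (insert {u, v}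
        ((univ \ {A.e, u, v}).image fun x => ({x} : Finset R))) := by simp
    have h2 := (ham _ hP hmem).2 {u, v} (by simp) {u, v} (by simp) {u, v} (by simp)
      u (by simp) v (by simp)
    simp only [Finset.sum_pair huv] at h2
    linarith
  -- choose witnesses distinct from e and two given elements
  choose w hw1 hw2 hw3 using fun a b : R => hwit A.e a b
  -- the function γ : constant value of c r s t for t outside {e,r,s}
  obtain ⟨γ, hγ⟩ : ∃ γ : R → R → ℝ, ∀ r s t, r ≠ A.e → s ≠ A.e → t ≠ A.e → t ≠ r → t ≠ s →
      A.c r s t = γ r s := by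
    refine ⟨fun r s => A.c r s (w r s), ?_⟩
    intro r s t hr hs ht htr hts
    by_cases htw : t = w r s
    · rw [htw]
    · exact hkey1 t (w r s) r s ht (hw1 r s) htw hr htr.symm (hw2 r s).symm
        hs hts.symm (hw3 r s).symm
  have hγsymm : ∀ r s, r ≠ A.e → s ≠ A.e → r ≠ s → γ r s = γ s r := by
    intro r s hr hs hrs
    have e1 : A.c r s (w r s) = γ r s := hγ r s (w r s) hr hs (hw1 r s) (hw2 r s) (hw3 r s)
    have e2 : A.c s r (w r s) = γ s r := hγ s r (w r s) hs hr (hw1 r s) (hw3 r s) (hw2 r s)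
    have e3 := hcomm r s (w r s)
    linarith
  -- the function κ
  obtain ⟨κ, hκ⟩ : ∃ κ : R → ℝ, ∀ r u, r ≠ A.e → u ≠ A.e → u ≠ r →
      A.c r u u = γ r u + κ r := by
    refine ⟨fun r => A.c r (w r r) (w r r) - γ r (w r r), ?_⟩
    intro r u hr hu hur
    by_cases huw : u = w r r
    · rw [huw]; ring
    · have h2 := hkey2 u (w r r) r hu (hw1 r r) huw hr hur.symm (hw2 r r).symm
      have e1 : A.c r (w r r) u = γ r (w r r) := hγ r (w r r) u hr (hw1 r r) hu hur huw
      have e2 : A.c r u (w r r) = γ r u := hγ r u (w r r) hr hu (hw1 r r) (hw2 r r)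
        (Ne.symm huw)
      dsimp only
      linarith
  have hβ : ∀ r t, r ≠ A.e → t ≠ A.e → t ≠ r → A.c r r t = γ r r :=
    fun r t hr ht htr => hγ r r t hr hr ht htr htr
  have hκ2 : ∀ r s, r ≠ A.e → s ≠ A.e → r ≠ s → A.c r s r = γ r s + κ s := by
    intro r s hr hs hrs
    have e1 := hκ s r hs hr hrs
    have e2 := hγsymm r s hr hs hrs
    rw [hcomm r s r]
    linarith
  -- the constant μ
  obtain ⟨μ, hμ⟩ : ∃ μ : ℝ, ∀ r, r ≠ A.e → A.c r r r = γ r r + 2 * κ r + μ := by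
    set a0 := w A.e A.e with ha0def
    have ha0 : a0 ≠ A.e := hw1 A.e A.e
    refine ⟨A.c a0 a0 a0 - γ a0 a0 - 2 * κ a0, ?_⟩
    intro r hr
    by_cases hra : r = a0
    · rw [hra]; ring
    · have h3 := hkey3 r a0 hr ha0 hra
      have e1 : A.c a0 r r = γ a0 r + κ a0 := hκ a0 r ha0 hr hra
      have e1' : A.c r a0 r = γ a0 r + κ a0 := by rw [hcomm r a0 r]; exact e1
      have e2 : A.c a0 a0 r = γ a0 a0 := hβ a0 r ha0 hr hra
      have e3 : A.c r r a0 = γ r r := hβ r a0 hr ha0 (Ne.symm hra)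
      have e4 : A.c r a0 a0 = γ r a0 + κ r := hκ r a0 hr ha0 (Ne.symm hra)
      have e4' : A.c a0 r a0 = γ r a0 + κ r := by rw [hcomm a0 r a0]; exact e4
      have e5 := hγsymm r a0 hr ha0 hra
      linarith
  -- global quantities
  obtain ⟨D, hDdef⟩ : ∃ D : ℝ, D = A.degree - 1 := ⟨_, rfl⟩
  have hdeg : A.degree = ∑ r, A.d r := rfl
  have hDsum : D = ∑ v ∈ univ \ {A.e}, A.d v := by
    rw [hDdef, hdeg, split1 univ A.d (mem_univ A.e), hdE]; ring
  have hDpos : 0 < D := by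
    rw [hDsum]
    apply Finset.sum_pos (fun i _ => hdpos i)
    exact ⟨w A.e A.e, by simp [hw1 A.e A.e]⟩
  have hD0 : D ≠ 0 := ne_of_gt hDpos
  obtain ⟨K, hKdef⟩ : ∃ K : ℝ, K = ∑ v ∈ univ \ {A.e}, κ v := ⟨_, rfl⟩
  obtain ⟨G, hGdef⟩ : ∃ G : R → ℝ, ∀ r, G r = ∑ v ∈ univ \ {A.e, r}, γ r v :=
    ⟨fun r => ∑ v ∈ univ \ {A.e, r}, γ r v, fun _ => rfl⟩
  have hset2 : ∀ r : R, (univ \ {A.e} : Finset R) \ {r} = univ \ {A.e, r} := by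
    intro r; ext x
    simp only [mem_sdiff, mem_univ, mem_singleton, mem_insert, true_and, not_or]
  have hdsum2 : ∀ r, r ≠ A.e → ∑ v ∈ univ \ {A.e, r}, A.d v = D - A.d r := by
    intro r hr
    have h1 := split1 (univ \ {A.e}) A.d (show r ∈ univ \ {A.e} by simp [hr])
    rw [hset2 r] at h1
    rw [hDsum, h1]; ring
  have hκsum2 : ∀ r, r ≠ A.e → ∑ v ∈ univ \ {A.e, r}, κ v = K - κ r := by
    intro r hr
    have h1 := split1 (univ \ {A.e}) κ (show r ∈ univ \ {A.e} by simp [hr])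
    rw [hset2 r] at h1
    rw [hKdef, h1]; ring
  have hset3 : ∀ r s : R, (univ \ {A.e, r} : Finset R) \ {s} = univ \ {A.e, r, s} := by
    intro r s; ext x
    simp only [mem_sdiff, mem_univ, mem_singleton, mem_insert, true_and, not_or]
    tauto
  have hdsum3 : ∀ r s, r ≠ A.e → s ≠ A.e → r ≠ s →
      ∑ v ∈ univ \ {A.e, r, s}, A.d v = D - A.d r - A.d s := by
    intro r s hr hs hrs
    have h1 := split1 (univ \ {A.e, r}) A.d
      (show s ∈ univ \ {A.e, r} by simp [hs, Ne.symm hrs])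
    rw [hset3 r s] at h1
    rw [← hdsum2 r hr, h1]; ring
  -- equation (E)
  have hE : ∀ r, r ≠ A.e → D * γ r r = A.d r * (A.d r - 1 - 2 * κ r - μ) := by
    intro r hr
    have h := hsum r r
    rw [split2 univ _ (mem_univ A.e) (mem_univ r) (Ne.symm hr)] at h
    have c1 : A.c r r A.e = A.d r := by rw [hc0]; simp
    have c2 := hμ r hr
    have h3 : ∑ v ∈ univ \ {A.e, r}, A.d v * A.c r r v = (D - A.d r) * γ r r := by
      rw [show ∑ v ∈ univ \ {A.e, r}, A.d v * A.c r r v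
          = ∑ v ∈ univ \ {A.e, r}, A.d v * γ r r from
        Finset.sum_congr rfl fun v hv => by
          simp only [mem_sdiff, mem_univ, mem_insert, mem_singleton, true_and, not_or] at hv
          rw [hβ r v hr hv.1 hv.2]]
      rw [← Finset.sum_mul, hdsum2 r hr]
    rw [hdE, c1, c2, h3] at h
    linear_combination h
  -- equation (F)
  have hF : ∀ r s, r ≠ A.e → s ≠ A.e → r ≠ s →
      D * γ r s = A.d r * A.d s - A.d r * κ s - A.d s * κ r := by
    intro r s hr hs hrs
    have h := hsum r s
    rw [split3 univ _ (mem_univ A.e) (mem_univ r) (mem_univ s) (Ne.symm hr) (Ne.symm hs) hrs]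
      at h
    have c1 : A.c r s A.e = 0 := by rw [hc0]; simp [Ne.symm hrs]
    have c2 := hκ2 r s hr hs hrs
    have c3 := hκ r s hr hs (Ne.symm hrs)
    have h3 : ∑ v ∈ univ \ {A.e, r, s}, A.d v * A.c r s v = (D - A.d r - A.d s) * γ r s := by
      rw [show ∑ v ∈ univ \ {A.e, r, s}, A.d v * A.c r s v
          = ∑ v ∈ univ \ {A.e, r, s}, A.d v * γ r s from
        Finset.sum_congr rfl fun v hv => by
          simp only [mem_sdiff, mem_univ, mem_insert, mem_singleton, true_and, not_or] at hv
          rw [hγ r s v hr hs hv.1 hv.2.1 hv.2.2]]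
      rw [← Finset.sum_mul, hdsum3 r s hr hs hrs]
    rw [hdE, c1, c2, c3, h3] at h
    linear_combination h
  -- summed version of (F)
  have hFsum : ∀ r, r ≠ A.e →
      D * G r = A.d r * (D - A.d r) - A.d r * (K - κ r) - (D - A.d r) * κ r := by
    intro r hr
    rw [hGdef r, Finset.mul_sum]
    rw [show ∑ v ∈ univ \ {A.e, r}, D * γ r v
        = ∑ v ∈ univ \ {A.e, r}, (A.d r * A.d v - A.d r * κ v - A.d v * κ r) from
      Finset.sum_congr rfl fun v hv => by
        simp only [mem_sdiff, mem_univ, mem_insert, mem_singleton, true_and, not_or] at hv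
        exact hF r v hr hv.1 (Ne.symm hv.2)]
    rw [Finset.sum_sub_distrib, Finset.sum_sub_distrib, ← Finset.mul_sum, ← Finset.mul_sum,
      ← Finset.sum_mul, hdsum2 r hr, hκsum2 r hr]
  -- more sum helpers
  have hset3' : ∀ a b c : R, (univ \ {a, b, c} : Finset R) = univ \ {a, c, b} := by
    intro a b c; ext x
    simp only [mem_sdiff, mem_univ, mem_insert, mem_singleton, true_and, not_or]
    tauto
  have hγsum3 : ∀ r s, r ≠ A.e → s ≠ A.e → r ≠ s →
      ∑ v ∈ univ \ {A.e, r, s}, γ s v = G s - γ s r := by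
    intro r s hr hs hrs
    have h1 := split1 (univ \ {A.e, s}) (γ s)
      (show r ∈ univ \ {A.e, s} by simp [hr, hrs])
    rw [hset3 s r, hset3' A.e s r] at h1
    rw [hGdef s, h1]; ring
  have hγsum3' : ∀ r s, r ≠ A.e → s ≠ A.e → r ≠ s →
      ∑ v ∈ univ \ {A.e, r, s}, γ r v = G r - γ r s := by
    intro r s hr hs hrs
    have h1 := split1 (univ \ {A.e, r}) (γ r)
      (show s ∈ univ \ {A.e, r} by simp [hs, Ne.symm hrs])
    rw [hset3 r s] at h1
    rw [hGdef r, h1]; ring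
  have hκsum3 : ∀ r s, r ≠ A.e → s ≠ A.e → r ≠ s →
      ∑ v ∈ univ \ {A.e, r, s}, κ v = K - κ r - κ s := by
    intro r s hr hs hrs
    have h1 := split1 (univ \ {A.e, r}) κ
      (show s ∈ univ \ {A.e, r} by simp [hs, Ne.symm hrs])
    rw [hset3 r s] at h1
    rw [hκsum2 r hr] at h1
    linarith
  have hset4 : ∀ a b c d : R, (univ \ {a, b, c} : Finset R) \ {d} = univ \ {a, b, c, d} := by
    intro a b c d; ext x
    simp only [mem_sdiff, mem_univ, mem_insert, mem_singleton, true_and, not_or]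
    tauto
  have hγsum4 : ∀ r s u, r ≠ A.e → s ≠ A.e → u ≠ A.e → r ≠ s → u ≠ r → u ≠ s →
      ∑ v ∈ univ \ {A.e, r, s, u}, γ s v = G s - γ s r - γ s u := by
    intro r s u hr hs hu hrs hur hus
    have h1 := split1 (univ \ {A.e, r, s}) (γ s)
      (show u ∈ univ \ {A.e, r, s} by simp [hu, hur, hus])
    rw [hset4 A.e r s u] at h1
    rw [hγsum3 r s hr hs hrs] at h1
    linarith
  have hγsum4' : ∀ r s u, r ≠ A.e → s ≠ A.e → u ≠ A.e → r ≠ s → u ≠ r → u ≠ s →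
      ∑ v ∈ univ \ {A.e, r, s, u}, γ r v = G r - γ r s - γ r u := by
    intro r s u hr hs hu hrs hur hus
    have h1 := split1 (univ \ {A.e, r, s}) (γ r)
      (show u ∈ univ \ {A.e, r, s} by simp [hu, hur, hus])
    rw [hset4 A.e r s u] at h1
    rw [hγsum3' r s hr hs hrs] at h1
    linarith
  -- associativity instance (G)
  have hGeq : ∀ r s, r ≠ A.e → s ≠ A.e → r ≠ s →
      μ * γ r s + γ r r * γ s s + γ r r * G s = γ r s * (γ r r + G r) := by
    intro r s hr hs hrs
    have hu1 : w r s ≠ A.e := hw1 r s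
    have hur : w r s ≠ r := hw2 r s
    have hus : w r s ≠ s := hw3 r s
    set u := w r s with hudef
    have h := hassoc r r s u
    have hL : ∑ v, A.c r r v * A.c v s u
        = (γ r r + 2 * κ r + μ) * γ r s + γ r r * γ s s + γ r r * (γ s u + κ s)
          + γ r r * (G s - γ s r - γ s u) := by
      rw [split4 univ _ (mem_univ A.e) (mem_univ r) (mem_univ s) (mem_univ u)
        (Ne.symm hr) (Ne.symm hs) (Ne.symm hu1) hrs (Ne.symm hur) (Ne.symm hus)]
      have t1 : A.c r r A.e * A.c A.e s u = 0 := by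
        rw [hcE s u, if_neg (Ne.symm hus), mul_zero]
      have t2 : A.c r r r * A.c r s u = (γ r r + 2 * κ r + μ) * γ r s := by
        rw [hμ r hr, hγ r s u hr hs hu1 hur hus]
      have t3 : A.c r r s * A.c s s u = γ r r * γ s s := by
        rw [hβ r s hr hs (Ne.symm hrs), hβ s u hs hu1 hus]
      have t4 : A.c r r u * A.c u s u = γ r r * (γ s u + κ s) := by
        rw [hβ r u hr hu1 hur, hcomm u s u, hκ s u hs hu1 hus]
      have t5 : ∑ v ∈ univ \ {A.e, r, s, u}, A.c r r v * A.c v s u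
          = γ r r * (G s - γ s r - γ s u) := by
        rw [show ∑ v ∈ univ \ {A.e, r, s, u}, A.c r r v * A.c v s u
            = ∑ v ∈ univ \ {A.e, r, s, u}, γ r r * γ s v from
          Finset.sum_congr rfl fun v hv => by
            simp only [mem_sdiff, mem_univ, mem_insert, mem_singleton, true_and,
              not_or] at hv
            rw [hβ r v hr hv.1 hv.2.1, hcomm v s u,
              hγ s v u hs hv.1 hu1 hus (Ne.symm hv.2.2.2)]]
        rw [← Finset.mul_sum, hγsum4 r s u hr hs hu1 hrs hur hus]
      rw [t1, t2, t3, t4, t5]; try ring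
    have hR : ∑ v, A.c r v u * A.c r s v
        = γ r r * (γ r s + κ s) + γ r s * (γ r s + κ r) + (γ r u + κ r) * γ r s
          + (G r - γ r s - γ r u) * γ r s := by
      rw [split4 univ _ (mem_univ A.e) (mem_univ r) (mem_univ s) (mem_univ u)
        (Ne.symm hr) (Ne.symm hs) (Ne.symm hu1) hrs (Ne.symm hur) (Ne.symm hus)]
      have t1 : A.c r A.e u * A.c r s A.e = 0 := by
        rw [hcE' r u, if_neg (Ne.symm hur), zero_mul]
      have t2 : A.c r r u * A.c r s r = γ r r * (γ r s + κ s) := by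
        rw [hβ r u hr hu1 hur, hκ2 r s hr hs hrs]
      have t3 : A.c r s u * A.c r s s = γ r s * (γ r s + κ r) := by
        rw [hγ r s u hr hs hu1 hur hus, hκ r s hr hs (Ne.symm hrs)]
      have t4 : A.c r u u * A.c r s u = (γ r u + κ r) * γ r s := by
        rw [hκ r u hr hu1 hur, hγ r s u hr hs hu1 hur hus]
      have t5 : ∑ v ∈ univ \ {A.e, r, s, u}, A.c r v u * A.c r s v
          = (G r - γ r s - γ r u) * γ r s := by
        rw [show ∑ v ∈ univ \ {A.e, r, s, u}, A.c r v u * A.c r s v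
            = ∑ v ∈ univ \ {A.e, r, s, u}, γ r v * γ r s from
          Finset.sum_congr rfl fun v hv => by
            simp only [mem_sdiff, mem_univ, mem_insert, mem_singleton, true_and,
              not_or] at hv
            rw [hγ r v u hr hv.1 hu1 hur (Ne.symm hv.2.2.2),
              hγ r s v hr hs hv.1 hv.2.1 hv.2.2.1]]
        rw [← Finset.sum_mul, hγsum4' r s u hr hs hu1 hrs hur hus]
      rw [t1, t2, t3, t4, t5]; try ring
    rw [hL, hR] at h
    have e6 := hγsymm r s hr hs hrs
    linear_combination h - γ r r * e6
  -- associativity instance (I)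
  have hIeq : ∀ r s, r ≠ A.e → s ≠ A.e → r ≠ s →
      γ r r * γ s s + γ r r * (G s - γ r s)
        = (γ r s + κ s) * (γ r s + κ r) + γ r s * (G r - γ r s + K - κ r - κ s) := by
    intro r s hr hs hrs
    have h := hassoc r r s r
    have hL : ∑ v, A.c r r v * A.c v s r
        = (γ r r + 2 * κ r + μ) * (γ r s + κ s) + γ r r * γ s s
          + γ r r * (G s - γ s r) := by
      rw [split3 univ _ (mem_univ A.e) (mem_univ r) (mem_univ s)
        (Ne.symm hr) (Ne.symm hs) hrs]
      have t1 : A.c r r A.e * A.c A.e s r = 0 := by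
        rw [hcE s r, if_neg (Ne.symm hrs), mul_zero]
      have t2 : A.c r r r * A.c r s r = (γ r r + 2 * κ r + μ) * (γ r s + κ s) := by
        rw [hμ r hr, hκ2 r s hr hs hrs]
      have t3 : A.c r r s * A.c s s r = γ r r * γ s s := by
        rw [hβ r s hr hs (Ne.symm hrs), hβ s r hs hr hrs]
      have t5 : ∑ v ∈ univ \ {A.e, r, s}, A.c r r v * A.c v s r
          = γ r r * (G s - γ s r) := by
        rw [show ∑ v ∈ univ \ {A.e, r, s}, A.c r r v * A.c v s r
            = ∑ v ∈ univ \ {A.e, r, s}, γ r r * γ s v from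
          Finset.sum_congr rfl fun v hv => by
            simp only [mem_sdiff, mem_univ, mem_insert, mem_singleton, true_and,
              not_or] at hv
            rw [hβ r v hr hv.1 hv.2.1, hcomm v s r,
              hγ s v r hs hv.1 hr hrs (Ne.symm hv.2.1)]]
        rw [← Finset.mul_sum, hγsum3 r s hr hs hrs]
      rw [t1, t2, t3, t5]; try ring
    have hR : ∑ v, A.c r v r * A.c r s v
        = (γ r r + 2 * κ r + μ) * (γ r s + κ s) + (γ r s + κ s) * (γ r s + κ r)
          + ((G r - γ r s) + (K - κ r - κ s)) * γ r s := by
      rw [split3 univ _ (mem_univ A.e) (mem_univ r) (mem_univ s)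
        (Ne.symm hr) (Ne.symm hs) hrs]
      have t1 : A.c r A.e r * A.c r s A.e = 0 := by
        rw [hc0 r s, if_neg (Ne.symm hrs), mul_zero]
      have t2 : A.c r r r * A.c r s r = (γ r r + 2 * κ r + μ) * (γ r s + κ s) := by
        rw [hμ r hr, hκ2 r s hr hs hrs]
      have t3 : A.c r s r * A.c r s s = (γ r s + κ s) * (γ r s + κ r) := by
        rw [hκ2 r s hr hs hrs, hκ r s hr hs (Ne.symm hrs)]
      have t5 : ∑ v ∈ univ \ {A.e, r, s}, A.c r v r * A.c r s v
          = ((G r - γ r s) + (K - κ r - κ s)) * γ r s := by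
        rw [show ∑ v ∈ univ \ {A.e, r, s}, A.c r v r * A.c r s v
            = ∑ v ∈ univ \ {A.e, r, s}, (γ r v + κ v) * γ r s from
          Finset.sum_congr rfl fun v hv => by
            simp only [mem_sdiff, mem_univ, mem_insert, mem_singleton, true_and,
              not_or] at hv
            rw [hκ2 r v hr hv.1 (Ne.symm hv.2.1), hγ r s v hr hs hv.1 hv.2.1 hv.2.2]]
        rw [← Finset.sum_mul, Finset.sum_add_distrib, hγsum3' r s hr hs hrs,
          hκsum3 r s hr hs hrs]
      rw [t1, t2, t3, t5]; try ring
    rw [hL, hR] at h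
    have e6 := hγsymm r s hr hs hrs
    linear_combination h - γ r r * e6
  -- associativity instance (H)
  have hHeq : ∀ r s, r ≠ A.e → s ≠ A.e → r ≠ s →
      A.d r + (γ r r + 2 * κ r + μ) * (γ r s + κ r) + γ r r * (γ s s + 2 * κ s + μ)
          + γ r r * ((G s - γ r s) + (K - κ r - κ s))
        = γ r r * (γ r s + κ s) + (γ r s + κ r) * (γ r s + κ r)
          + (G r - γ r s) * γ r s := by
    intro r s hr hs hrs
    have h := hassoc r r s s
    have hL : ∑ v, A.c r r v * A.c v s s
        = A.d r + (γ r r + 2 * κ r + μ) * (γ r s + κ r)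
          + γ r r * (γ s s + 2 * κ s + μ)
          + γ r r * ((G s - γ s r) + (K - κ r - κ s)) := by
      rw [split3 univ _ (mem_univ A.e) (mem_univ r) (mem_univ s)
        (Ne.symm hr) (Ne.symm hs) hrs]
      have t1 : A.c r r A.e * A.c A.e s s = A.d r := by
        rw [hcE s s, if_pos rfl, hc0 r r, if_pos rfl, mul_one]
      have t2 : A.c r r r * A.c r s s = (γ r r + 2 * κ r + μ) * (γ r s + κ r) := by
        rw [hμ r hr, hκ r s hr hs (Ne.symm hrs)]
      have t3 : A.c r r s * A.c s s s = γ r r * (γ s s + 2 * κ s + μ) := by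
        rw [hβ r s hr hs (Ne.symm hrs), hμ s hs]
      have t5 : ∑ v ∈ univ \ {A.e, r, s}, A.c r r v * A.c v s s
          = γ r r * ((G s - γ s r) + (K - κ r - κ s)) := by
        rw [show ∑ v ∈ univ \ {A.e, r, s}, A.c r r v * A.c v s s
            = ∑ v ∈ univ \ {A.e, r, s}, γ r r * (γ s v + κ v) from
          Finset.sum_congr rfl fun v hv => by
            simp only [mem_sdiff, mem_univ, mem_insert, mem_singleton, true_and,
              not_or] at hv
            rw [hβ r v hr hv.1 hv.2.1, hκ v s hv.1 hs (Ne.symm hv.2.2),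
              hγsymm v s hv.1 hs hv.2.2]]
        rw [← Finset.mul_sum, Finset.sum_add_distrib, hγsum3 r s hr hs hrs,
          hκsum3 r s hr hs hrs]
      rw [t1, t2, t3, t5]; try ring
    have hR : ∑ v, A.c r v s * A.c r s v
        = γ r r * (γ r s + κ s) + (γ r s + κ r) * (γ r s + κ r)
          + (G r - γ r s) * γ r s := by
      rw [split3 univ _ (mem_univ A.e) (mem_univ r) (mem_univ s)
        (Ne.symm hr) (Ne.symm hs) hrs]
      have t1 : A.c r A.e s * A.c r s A.e = 0 := by
        rw [hcE' r s, if_neg hrs, zero_mul]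
      have t2 : A.c r r s * A.c r s r = γ r r * (γ r s + κ s) := by
        rw [hβ r s hr hs (Ne.symm hrs), hκ2 r s hr hs hrs]
      have t3 : A.c r s s * A.c r s s = (γ r s + κ r) * (γ r s + κ r) := by
        rw [hκ r s hr hs (Ne.symm hrs)]
      have t5 : ∑ v ∈ univ \ {A.e, r, s}, A.c r v s * A.c r s v
          = (G r - γ r s) * γ r s := by
        rw [show ∑ v ∈ univ \ {A.e, r, s}, A.c r v s * A.c r s v
            = ∑ v ∈ univ \ {A.e, r, s}, γ r v * γ r s from
          Finset.sum_congr rfl fun v hv => by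
            simp only [mem_sdiff, mem_univ, mem_insert, mem_singleton, true_and,
              not_or] at hv
            rw [hγ r v s hr hv.1 hs (Ne.symm hrs) (Ne.symm hv.2.2),
              hγ r s v hr hs hv.1 hv.2.1 hv.2.2]]
        rw [← Finset.sum_mul, hγsum3' r s hr hs hrs]
      rw [t1, t2, t3, t5]; try ring
    rw [hL, hR] at h
    have e6 := hγsymm r s hr hs hrs
    linear_combination h - γ r r * e6
  -- derived equations (J) and (H'')
  have hJ : ∀ r s, r ≠ A.e → s ≠ A.e → r ≠ s →
      κ r * κ s + γ r s * (K + μ) = 0 := by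
    intro r s hr hs hrs
    linear_combination hGeq r s hr hs hrs - hIeq r s hr hs hrs
  have hHpp : ∀ r, r ≠ A.e → A.d r + κ r ^ 2 + μ * κ r + (K + μ) * γ r r = 0 := by
    intro r hr
    have hs : w r r ≠ A.e := hw1 r r
    have hrs : r ≠ w r r := (hw2 r r).symm
    linear_combination hHeq r (w r r) hr hs hrs - hIeq r (w r r) hr hs hrs
      - hJ r (w r r) hr hs hrs
  -- pivot element
  obtain ⟨a1, ha1⟩ : ∃ a1 : R, a1 ≠ A.e := ⟨w A.e A.e, hw1 A.e A.e⟩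
  by_cases hall : ∀ r s, r ≠ A.e → s ≠ A.e → κ r * A.d s = κ s * A.d r
  · -- main case: all κ proportional to the degrees
    obtain ⟨z, hzdef⟩ : ∃ z : ℝ, z = κ a1 / A.d a1 := ⟨_, rfl⟩
    have hz : ∀ r, r ≠ A.e → κ r = z * A.d r := by
      intro r hr
      have h1 := hall r a1 hr ha1
      rw [hzdef, div_mul_eq_mul_div, eq_div_iff (hdpos a1).ne']
      linarith [h1]
    have hKz : K = z * D := by
      rw [hKdef, hDsum, Finset.mul_sum]
      refine Finset.sum_congr rfl fun v hv => ?_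
      simp only [mem_sdiff, mem_univ, mem_singleton, true_and] at hv
      exact hz v hv
    obtain ⟨b1, hb1e, hb1a⟩ : ∃ b1 : R, b1 ≠ A.e ∧ b1 ≠ a1 := ⟨w A.e a1, hw1 _ _, hw3 _ _⟩
    have hab : a1 ≠ b1 := Ne.symm hb1a
    have hJ' := hJ a1 b1 ha1 hb1e hab
    have hF' := hF a1 b1 ha1 hb1e hab
    have hE' := hE a1 ha1
    have hHp' := hHpp a1 ha1
    rw [hz a1 ha1, hz b1 hb1e, hKz] at hJ'
    rw [hz a1 ha1, hz b1 hb1e] at hF'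
    rw [hz a1 ha1] at hE'
    rw [hz a1 ha1, hKz] at hHp'
    have hda := (hdpos a1).ne'
    have hdb := (hdpos b1).ne'
    have hJ1 : D * z ^ 2 + (z * D + μ) * (1 - 2 * z) = 0 := by
      have h3 : A.d a1 * A.d b1 * (D * z ^ 2 + (z * D + μ) * (1 - 2 * z)) = 0 := by
        linear_combination D * hJ' - (z * D + μ) * hF'
      rcases mul_eq_zero.mp h3 with h4 | h4
      · exact absurd h4 (mul_ne_zero hda hdb)
      · exact h4
    have hH3 : D + μ * z * D - (z * D + μ) * (1 + μ) = 0 := by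
      have h3 : A.d a1 * (D + μ * z * D - (z * D + μ) * (1 + μ)) = 0 := by
        linear_combination D * hHp' - (z * D + μ) * hE' - A.d a1 ^ 2 * hJ1
      rcases mul_eq_zero.mp h3 with h4 | h4
      · exact absurd h4 hda
      · exact h4
    have hG' := hGeq a1 b1 ha1 hb1e hab
    have hEb := hE b1 hb1e
    have hFsa := hFsum a1 ha1
    have hFsb := hFsum b1 hb1e
    rw [hz a1 ha1, hKz] at hFsa
    rw [hz b1 hb1e] at hEb
    rw [hz b1 hb1e, hKz] at hFsb
    have hG2 : (1 + μ) ^ 2 = D * (1 - 2 * z) := by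
      have h3 : A.d a1 * A.d b1 * ((1 + μ) ^ 2 - D * (1 - 2 * z)) = 0 := by
        linear_combination D ^ 2 * hG'
          + (A.d a1 * A.d b1 * (1 - 2 * z) - D * γ b1 b1 - D * G b1) * hE'
          - (A.d a1 * (A.d a1 - 1 - 2 * (z * A.d a1) - μ)) * hEb
          - (A.d a1 * (A.d a1 - 1 - 2 * (z * A.d a1) - μ)) * hFsb
          + (D * γ a1 a1 + D * G a1 - μ * D) * hF'
          + (A.d a1 * A.d b1 * (1 - 2 * z)) * hFsa
      rcases mul_eq_zero.mp h3 with h4 | h4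
      · exact absurd h4 (mul_ne_zero hda hdb)
      · linarith
    by_cases hμ0 : μ = 0
    · exfalso
      have h5 : z * D = D := by rw [hμ0] at hH3; linear_combination -hH3
      have h6 : (1 : ℝ) = D - 2 * (z * D) := by rw [hμ0] at hG2; linear_combination hG2
      linarith
    have hμz : μ * (1 - z + z * μ) = 0 := by linear_combination hJ1 - z * hH3
    have hzz : 1 - z + z * μ = 0 := by
      rcases mul_eq_zero.mp hμz with h | h
      · exact absurd h hμ0
      · exact h
    by_cases hμm1 : μ = -1
    · exfalso
      have h5 : D - z * D = 0 := by rw [hμm1] at hH3; linear_combination hH3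
      have h6 : z = 1 / 2 := by rw [hμm1] at hzz; linarith
      rw [h6] at h5
      linarith
    have hμ1 : μ ≠ 1 := by
      intro h; rw [h] at hzz; linarith
    have hμsq : μ ^ 2 = D + 1 := by
      have key : (1 + μ) * ((1 + μ) * (1 - μ) + D) = 0 := by
        linear_combination (1 - μ) * hG2 + 2 * D * hzz
      rcases mul_eq_zero.mp key with h | h
      · exact absurd (by linarith : μ = -1) hμm1
      · linear_combination -h
    have hdeg2 : A.degree = μ ^ 2 := by linear_combination - hμsq - hDdef
    have hμm1' : (1 : ℝ) - μ ≠ 0 := fun h => hμ1 (by linarith)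
    have hq0 : ((μ : ℝ) - 1) ^ 2 ≠ 0 := pow_ne_zero 2 (sub_ne_zero.mpr hμ1)
    have hz9 : z = 1 / (1 - μ) := by
      rw [eq_div_iff hμm1']
      linear_combination -hzz
    -- the master computation, for either sign
    have master : ∀ ε : ℝ, (Real.sqrt A.degree + ε) ^ 2 = (μ - 1) ^ 2 →
        (∀ r s t, r ≠ A.e → s ≠ A.e → t ≠ A.e → r ≠ s → s ≠ t → r ≠ t →
          A.c r s t = A.d r * A.d s / (Real.sqrt A.degree + ε) ^ 2) ∧
        (∀ r t, r ≠ A.e → t ≠ A.e → t ≠ r →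
          A.c r r t = A.d r / 2 *
            (1 + (A.d r - (A.degree - 1 - A.d r)) / (Real.sqrt A.degree + ε) ^ 2)) ∧
        (∀ r, r ≠ A.e →
          A.c r r r = -((A.degree - 1 - A.d r) / 2) *
            (1 + (A.d r - (A.degree - 1 - A.d r)) / (Real.sqrt A.degree + ε) ^ 2)
            + A.d r - 1) := by
      intro ε hsq
      have h8 : ∀ r, r ≠ A.e → γ r r * (μ - 1) ^ 2 = A.d r * (1 + A.d r - μ) := by
        intro r hr
        have hE'' := hE r hr
        rw [hz r hr] at hE''
        have h7 : D * (γ r r * (μ - 1) ^ 2 - A.d r * (1 + A.d r - μ)) = 0 := by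
          linear_combination (μ - 1) ^ 2 * hE'' + 2 * A.d r ^ 2 * (1 - μ) * hzz
            + A.d r * (1 + A.d r - μ) * hμsq
        rcases mul_eq_zero.mp h7 with h4 | h4
        · exact absurd h4 hD0
        · linarith
      refine ⟨?_, ?_, ?_⟩
      · intro r s t hr hs ht hrs hst hrt
        rw [hγ r s t hr hs ht (Ne.symm hrt) (Ne.symm hst), hsq, eq_div_iff hq0]
        have hF'' := hF r s hr hs hrs
        rw [hz r hr, hz s hs] at hF''
        have h7 : D * (γ r s * (μ - 1) ^ 2 - A.d r * A.d s) = 0 := by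
          linear_combination (μ - 1) ^ 2 * hF'' + 2 * A.d r * A.d s * (1 - μ) * hzz
            + A.d r * A.d s * hμsq
        rcases mul_eq_zero.mp h7 with h4 | h4
        · exact absurd h4 hD0
        · linarith
      · intro r t hr ht htr
        rw [hβ r t hr ht htr, hsq, hdeg2]
        have hg : γ r r = A.d r * (1 + A.d r - μ) / (μ - 1) ^ 2 := by
          rw [eq_div_iff hq0]; exact h8 r hr
        rw [hg]
        field_simp
        ring
      · intro r hr
        rw [hμ r hr, hz r hr, hsq, hdeg2]
        have hg : γ r r = A.d r * (1 + A.d r - μ) / (μ - 1) ^ 2 := by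
          rw [eq_div_iff hq0]; exact h8 r hr
        rw [hg, hz9]
        field_simp
        ring
    rcases lt_or_gt_of_ne hμ0 with hneg | hpos
    · -- μ < 0, take ε = 1
      have hsqrt : Real.sqrt A.degree = -μ := by
        rw [hdeg2, show μ ^ 2 = (-μ) ^ 2 by ring]
        exact Real.sqrt_sq (by linarith)
      have hsq : (Real.sqrt A.degree + 1) ^ 2 = (μ - 1) ^ 2 := by rw [hsqrt]; ring
      obtain ⟨m1, m2, m3⟩ := master 1 hsq
      exact ⟨1, Or.inr rfl, by rw [hsqrt]; linarith, m1, m2, m3⟩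
    · -- μ > 0, take ε = -1
      have hμgt1 : 1 < μ := by nlinarith [hμsq, hDpos]
      have hsqrt : Real.sqrt A.degree = μ := by
        rw [hdeg2]; exact Real.sqrt_sq (by linarith)
      have hsq : (Real.sqrt A.degree + (-1)) ^ 2 = (μ - 1) ^ 2 := by rw [hsqrt]; ring
      obtain ⟨m1, m2, m3⟩ := master (-1) hsq
      exact ⟨-1, Or.inl rfl, by rw [hsqrt]; linarith, m1, m2, m3⟩
  · -- degenerate case: impossible
    exfalso
    push_neg at hall
    obtain ⟨s0, t0, hs0, ht0, hne⟩ := hall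
    have hst : s0 ≠ t0 := by rintro rfl; exact hne rfl
    obtain ⟨M, hMdef⟩ : ∃ M : ℝ, M = K + μ := ⟨_, rfl⟩
    have hTri : ∀ r s t, r ≠ A.e → s ≠ A.e → t ≠ A.e → r ≠ s → r ≠ t → s ≠ t →
        (κ s * A.d t - κ t * A.d s) * (D * κ r - M * A.d r) = 0 := by
      intro r s t hr hs ht hrs hrt hst'
      rw [hMdef]
      linear_combination A.d t * D * hJ r s hr hs hrs - A.d t * (K + μ) * hF r s hr hs hrs
        - A.d s * D * hJ r t hr ht hrt + A.d s * (K + μ) * hF r t hr ht hrt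
    have hprop : ∀ r, r ≠ A.e → r ≠ s0 → r ≠ t0 → D * κ r = M * A.d r := by
      intro r hr hrs hrt
      have h1 := hTri r s0 t0 hr hs0 ht0 hrs hrt hst
      rcases mul_eq_zero.mp h1 with h | h
      · exact absurd (sub_eq_zero.mp h) hne
      · linarith [sub_eq_zero.mp h]
    obtain ⟨a, b, hae, hbe, hab2, hexc⟩ : ∃ a b : R, a ≠ A.e ∧ b ≠ A.e ∧ a ≠ b ∧
        ∀ v, v ≠ A.e → v ≠ a → D * κ v = M * A.d v := by
      by_cases hDs0 : D * κ s0 = M * A.d s0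
      · refine ⟨t0, s0, ht0, hs0, Ne.symm hst, ?_⟩
        intro v hv hvt
        by_cases hvs : v = s0
        · rw [hvs]; exact hDs0
        · exact hprop v hv hvs hvt
      · refine ⟨s0, t0, hs0, ht0, hst, ?_⟩
        intro v hv hvs
        by_cases hvt : v = t0
        · rw [hvt]
          have hr0e : w s0 t0 ≠ A.e := hw1 _ _
          have hr0s : w s0 t0 ≠ s0 := hw2 _ _
          have hr0t : w s0 t0 ≠ t0 := hw3 _ _
          have h1 := hTri s0 (w s0 t0) t0 hs0 hr0e ht0 (Ne.symm hr0s) hst hr0t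
          rcases mul_eq_zero.mp h1 with h | h
          · have h2 := sub_eq_zero.mp h
            have h3 := hprop (w s0 t0) hr0e hr0s hr0t
            have h4 : A.d (w s0 t0) * (D * κ t0 - M * A.d t0) = 0 := by
              linear_combination A.d t0 * h3 - D * h2
            rcases mul_eq_zero.mp h4 with h5 | h5
            · exact absurd h5 (hdpos _).ne'
            · linarith
          · exact absurd (sub_eq_zero.mp h) hDs0
        · exact hprop v hv hvs hvt
    obtain ⟨c, hce, hca, hcb⟩ : ∃ c : R, c ≠ A.e ∧ c ≠ a ∧ c ≠ b :=
      ⟨w a b, hw1 _ _, hw2 _ _, hw3 _ _⟩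
    have hvb := hexc b hbe (Ne.symm hab2)
    have hvc := hexc c hce hca
    have hMD : M * (D - M) = 0 := by
      have hJbc := hJ b c hbe hce (Ne.symm hcb)
      rw [← hMdef] at hJbc
      have h3 : A.d b * A.d c * (M * (D - M)) = 0 := by
        linear_combination D ^ 2 * hJbc
          - D * M * hF b c hbe hce (Ne.symm hcb)
          - (D * κ c - M * A.d c) * hvb
      rcases mul_eq_zero.mp h3 with h4 | h4
      · exact absurd h4 (mul_ne_zero (hdpos b).ne' (hdpos c).ne')
      · exact h4
    rcases mul_eq_zero.mp hMD with hM0 | hDM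
    · -- M = 0
      have hκb : κ b = 0 := by
        rw [hM0, zero_mul] at hvb
        rcases mul_eq_zero.mp hvb with h | h
        · exact absurd h hD0
        · exact h
      have h9 := hHpp b hbe
      rw [hκb, ← hMdef, hM0] at h9
      nlinarith [hdpos b]
    · -- M = D
      have hMeqD : M = D := by linarith [sub_eq_zero.mp hDM]
      have hκv : ∀ v, v ≠ A.e → v ≠ a → κ v = A.d v := by
        intro v hv hva
        have h1 := hexc v hv hva
        rw [hMeqD] at h1
        exact mul_left_cancel₀ hD0 h1
      have hKval : K = κ a + (D - A.d a) := by
        have h1 := split1 (univ \ {A.e}) κ (show a ∈ univ \ {A.e} by simp [hae])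
        rw [hset2 a] at h1
        have h2 : ∑ v ∈ univ \ {A.e, a}, κ v = ∑ v ∈ univ \ {A.e, a}, A.d v :=
          Finset.sum_congr rfl fun v hv => by
            simp only [mem_sdiff, mem_univ, mem_insert, mem_singleton, true_and,
              not_or] at hv
            exact hκv v hv.1 hv.2
        rw [hKdef, h1, h2, hdsum2 a hae]
      have hμval : μ = A.d a - κ a := by
        have h1 : D = K + μ := by rw [← hMeqD]; exact hMdef
        rw [hKval] at h1
        linarith
      have hG'' := hGeq a b hae hbe hab2
      have hEa := hE a hae
      have hEb2 := hE b hbe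
      have hFab := hF a b hae hbe hab2
      have hSa := hFsum a hae
      have hSb := hFsum b hbe
      have hκb2 : κ b = A.d b := hκv b hbe (Ne.symm hab2)
      rw [hμval] at hG''
      rw [hμval] at hEa
      rw [hμval, hκb2] at hEb2
      rw [hκb2] at hFab
      rw [hKval] at hSa
      rw [hκb2, hKval] at hSb
      have hcon : A.d a * A.d b * (D + 1) = 0 := by
        linear_combination D ^ 2 * hG''
          + (A.d a * A.d b - A.d a * A.d b - A.d b * κ a - D * γ b b - D * G b) * hEa
          - (A.d a * (A.d a - 1 - 2 * κ a - (A.d a - κ a))) * hEb2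
          - (A.d a * (A.d a - 1 - 2 * κ a - (A.d a - κ a))) * hSb
          + (D * γ a a + D * G a - (A.d a - κ a) * D) * hFab
          + (A.d a * A.d b - A.d a * A.d b - A.d b * κ a) * hSa
      have hpos2 : 0 < A.d a * A.d b * (D + 1) :=
        mul_pos (mul_pos (hdpos a) (hdpos b)) (by linarith)
      linarith
end

section
/- Let (R, e, *, d, c) be a nontrivial amorphic C-algebra of degree n all of whose structure constants are integers, with sign ε. Then it is a fusion of a generalized affine C-algebra: there exist a nontrivial amorphic C-algebra (R', e', *', d', c') of the same degree n which is homogeneous with common degree d'_u = √n + ε for all u ∈ R'^#, a partition π' of R' with {e'} ∈ π', and a bijection φ : R → π' with φ(e) = {e'}, such that for all r, s, t ∈ R: d_r = Σ_{u∈φ(r)} d'_u and, for every w ∈ φ(t), c_{r,s}^t = Σ_{u∈φ(r)} Σ_{v∈φ(s)} c'_{u,v}^w. -/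
open Finset

/-!
Write `q = √n + ε`. Amorphy applied to the partition `{e}, {r}, R \ {e, r}` forces `r* = r` and
makes `c_{r,r}^u` independent of `u ∉ {e, r}`. Feeding the sign condition into the degree
identity `∑_t d_t c_{a,b}^t = d_a d_b` gives linear relations among these constants, whose
solution shows that on `R^#` the structure constants are those of the fusion of the generalized
affine `C`-algebra along classes of size `d_r / q`. Since
`c_{r,s}^s - c_{r,s}^t = ε d_r / q` for distinct `r, s, t ∈ R^#`, integrality makes each `d_r / q`
a positive integer, so these classes can actually be formed. The generalized affine `C`-algebra
itself is associative because its characters are multiplicative and orthogonal.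
-/

lemma sum_mul_eq_of_eq_off {ι : Type*} [Fintype ι] (P : Finset ι) {x : ι → ℝ} {C : ℝ}
    (h : ∀ t ∉ P, x t = C) (w : ι → ℝ) :
    ∑ t, w t * x t = (∑ t, w t) * C + ∑ t ∈ P, w t * (x t - C) := by
  rw [sum_subset (subset_univ P) fun t _ ht => by rw [h t ht, sub_self, mul_zero], sum_mul,
    ← sum_add_distrib]
  exact sum_congr rfl fun t _ => by ring

lemma exists_ne_of_four_le_card {R : Type*} [Fintype R] [DecidableEq R]
    (hR : 4 ≤ Fintype.card R) (a b c : R) : ∃ z, z ≠ a ∧ z ≠ b ∧ z ≠ c := by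
  obtain ⟨z, -, hz⟩ := exists_mem_notMem_of_card_lt_card (s := {a, b, c}) (t := univ)
    (by rw [card_univ]; linarith [card_le_three (a := a) (b := b) (c := c)])
  simp only [mem_insert, mem_singleton, not_or] at hz
  exact ⟨z, hz⟩

section Partition

variable {X : Type*} [Fintype X]

lemma IsPartition.eq_of_mem {π : Finset (Finset X)} (hπ : IsPartition π) {S T : Finset X}
    (hS : S ∈ π) (hT : T ∈ π) {x : X} (hxS : x ∈ S) (hxT : x ∈ T) : S = T :=
  (hπ.2 x).unique ⟨hS, hxS⟩ ⟨hT, hxT⟩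

variable {Y : Type*} [DecidableEq Y] {g : X → Y}

lemma isPartition_image_fiber [DecidableEq X] [Fintype Y] (hg : Function.Surjective g) :
    IsPartition (univ.image fun y => ({x | g x = y} : Finset X)) := by
  refine ⟨?_, fun x => ⟨({x' | g x' = g x} : Finset X), by simp, ?_⟩⟩
  · simp only [mem_image, mem_univ, true_and, forall_exists_index, forall_apply_eq_imp_iff]
    intro y
    obtain ⟨x, rfl⟩ := hg y
    exact ⟨x, by simp⟩
  · simp only [mem_image, mem_univ, true_and, and_imp, forall_exists_index,
      forall_apply_eq_imp_iff]
    intro y hx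
    rw [(mem_filter.1 hx).2]

lemma fiber_injective (hg : Function.Surjective g) :
    Function.Injective fun y => ({x | g x = y} : Finset X) := by
  intro y y' h
  obtain ⟨x, rfl⟩ := hg y
  simpa using congrArg (x ∈ ·) h

lemma card_fiber_inter_fiber [DecidableEq X] (y y' : Y) :
    #(({x | g x = y} : Finset X) ∩ ({x | g x = y'} : Finset X)) =
      if y = y' then #{x | g x = y} else 0 := by
  split_ifs with h
  · rw [h, inter_self]
  · rw [card_eq_zero, ← disjoint_iff_inter_eq_empty, disjoint_filter]
    exact fun x _ hy hy' => h (hy ▸ hy')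

end Partition

lemma exists_fin_fibration {R : Type*} [Fintype R] [DecidableEq R] (e : R) (m : R → ℕ) :
    ∃ (N : ℕ) (pr : Fin N → R) (e' : Fin N),
      ({u | pr u = e} : Finset (Fin N)) = {e'} ∧ ∀ r, r ≠ e → #{u | pr u = r} = m r := by
  let k r := if r = e then 1 else m r
  let E := Fintype.equivFin (Σ r, Fin (k r))
  have hk r : #{u | (E.symm u).1 = r} = k r := by
    rw [← Fintype.card_subtype, ← Fintype.card_fin (k r)]
    exact Fintype.card_congr ((E.symm.subtypeEquiv fun _ => Iff.rfl).trans (Equiv.sigmaSubtype r))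
  obtain ⟨e', he'⟩ := card_eq_one.1 ((hk e).trans (if_pos rfl))
  exact ⟨_, fun u => (E.symm u).1, e', he', fun r hr => (hk r).trans (if_neg hr)⟩

section Characters

variable {X Y : Type*} [Fintype X] [Fintype Y] [DecidableEq X]
  {χ : Y → X → ℝ} {μ : Y → ℝ} {N : X → ℝ}

lemma eq_zero_of_sum_mul_char_eq_zero
    (horth : ∀ u u', ∑ y, μ y * (χ y u * χ y u') = if u = u' then N u else 0)
    (hN : ∀ u, N u ≠ 0) {f : X → ℝ} (hf : ∀ y, ∑ u, f u * χ y u = 0) (u : X) : f u = 0 := by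
  have h : N u * f u = ∑ y, μ y * χ y u * ∑ u', f u' * χ y u' := calc
    N u * f u = ∑ u', f u' * ∑ y, μ y * (χ y u * χ y u') := by simp [horth, mul_comm]
    _ = ∑ y, μ y * χ y u * ∑ u', f u' * χ y u' := by
      simp only [mul_sum]
      rw [sum_comm]
      exact sum_congr rfl fun y _ => sum_congr rfl fun u' _ => by ring
  simpa [hf, hN u] using h

theorem assoc_of_orthogonal_chars {c : X → X → X → ℝ}
    (hmul : ∀ y r s, ∑ t, c r s t * χ y t = χ y r * χ y s)
    (horth : ∀ u u', ∑ y, μ y * (χ y u * χ y u') = if u = u' then N u else 0)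
    (hN : ∀ u, N u ≠ 0) (r s t u : X) :
    ∑ v, c r s v * c v t u = ∑ v, c r v u * c s t v := by
  refine sub_eq_zero.1 (eq_zero_of_sum_mul_char_eq_zero horth hN (f := fun u =>
    ∑ v, c r s v * c v t u - ∑ v, c r v u * c s t v) (fun y => ?_) u)
  have hleft : ∑ u, (∑ v, c r s v * c v t u) * χ y u = χ y r * χ y s * χ y t := calc
    _ = ∑ v, c r s v * ∑ u, c v t u * χ y u := by
      simp only [sum_mul, mul_sum, mul_assoc]; exact sum_comm
    _ = (∑ v, c r s v * χ y v) * χ y t := by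
      rw [sum_mul]; exact sum_congr rfl fun v _ => by rw [hmul, mul_assoc]
    _ = χ y r * χ y s * χ y t := by rw [hmul]
  have hright : ∑ u, (∑ v, c r v u * c s t v) * χ y u = χ y r * χ y s * χ y t := calc
    _ = ∑ v, c s t v * ∑ u, c r v u * χ y u := by
      simp only [sum_mul, mul_sum, mul_comm (c r _ _), mul_assoc]; exact sum_comm
    _ = χ y r * ∑ v, c s t v * χ y v := by
      rw [mul_sum]; exact sum_congr rfl fun v _ => by rw [hmul, mul_left_comm]
    _ = χ y r * χ y s * χ y t := by rw [hmul, mul_assoc]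
  simp only [sub_mul, sum_sub_distrib, hleft, hright, sub_self]

end Characters

section AffineAlgebra

variable {X : Type*} [DecidableEq X]

noncomputable def affineDeg (e : X) (q : ℝ) (x : X) : ℝ := if x = e then 1 else q

noncomputable def affineConst (e : X) (q ε : ℝ) (r s t : X) : ℝ :=
  if r = e then (if s = t then 1 else 0)
  else if s = e then (if r = t then 1 else 0)
  else if t = e then (if r = s then q else 0)
  else 1 + ε * ((if r = t then 1 else 0) + (if s = t then 1 else 0) + (if r = s then 1 else 0))
    + if r = s ∧ s = t then 1 - ε * q else 0

noncomputable def affineAlgebra (e : X) (q ε : ℝ) : CAlgebraData X :=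
  ⟨e, id, affineDeg e q, affineConst e q ε⟩

/-- The characters of `affineAlgebra e q ε`; they are orthogonal for the weights `affineDeg e q`. -/
noncomputable def affineChar (e : X) (q ε : ℝ) (y r : X) : ℝ :=
  if y = e then affineDeg e q r else if r = e then 1 else ε + if r = y then 1 - ε * q else 0

variable {e : X} {q ε : ℝ}

lemma affineDeg_of_ne {x : X} (hx : x ≠ e) : affineDeg e q x = q := if_neg hx

lemma affineDeg_pos (hq : 0 < q) (x : X) : 0 < affineDeg e q x := by
  unfold affineDeg; split_ifs <;> positivity

lemma affineConst_of_ne {r s t : X} (hr : r ≠ e) (hs : s ≠ e) (ht : t ≠ e) :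
    affineConst e q ε r s t =
      1 + ε * ((if r = t then 1 else 0) + (if s = t then 1 else 0) + (if r = s then 1 else 0))
        + if r = s ∧ s = t then 1 - ε * q else 0 := by
  simp [affineConst, hr, hs, ht]

lemma affineConst_unit_right (r t : X) : affineConst e q ε r e t = if r = t then 1 else 0 := by
  unfold affineConst; split_ifs <;> simp_all

lemma affineConst_comm (r s t : X) : affineConst e q ε r s t = affineConst e q ε s r t := by
  unfold affineConst
  split_ifs <;> subst_vars <;> first | rfl | ring1 | tauto

lemma affineChar_of_ne {y r : X} (hy : y ≠ e) (hr : r ≠ e) :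
    affineChar e q ε y r = ε + if r = y then 1 - ε * q else 0 := by
  simp [affineChar, hy, hr]

lemma affineChar_unit (y : X) : affineChar e q ε y e = 1 := by
  by_cases hy : y = e <;> simp [affineChar, affineDeg, hy]

lemma sum_sum_affineConst {S T : Finset X} (hS : e ∉ S) (hT : e ∉ T) {w : X} (hw : w ≠ e) :
    ∑ u ∈ S, ∑ v ∈ T, affineConst e q ε u v w =
      #S * #T + ε * ((if w ∈ S then (#T : ℝ) else 0) + (if w ∈ T then (#S : ℝ) else 0)
        + #(S ∩ T)) + if w ∈ S ∧ w ∈ T then 1 - ε * q else 0 := by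
  rw [sum_congr rfl fun u hu => sum_congr rfl fun v hv =>
    affineConst_of_ne (ne_of_mem_of_not_mem hu hS) (ne_of_mem_of_not_mem hv hT) hw]
  simp [sum_add_distrib, ← mul_sum, ite_and]

lemma sum_sum_affineConst_unit {S T : Finset X} (hS : e ∉ S) (hT : e ∉ T) :
    ∑ u ∈ S, ∑ v ∈ T, affineConst e q ε u v e = q * #(S ∩ T) := by
  rw [sum_congr rfl fun u hu => sum_congr rfl fun v hv => by
    rw [affineConst, if_neg (ne_of_mem_of_not_mem hu hS), if_neg (ne_of_mem_of_not_mem hv hT),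
      if_pos rfl]]
  simp [← filter_mem_eq_inter, mul_comm]

theorem isAmorphic_affineAlgebra [Fintype X] : IsAmorphic (affineAlgebra e q ε) := by
  intro π hπ he
  refine ⟨fun S hS => by simpa [affineAlgebra] using hS, fun S hS T hT U hU u hu v hv => ?_⟩
  have hmem : ∀ W ∈ π, u ∈ W ↔ v ∈ W := fun W hW =>
    ⟨fun h => hπ.eq_of_mem hW hU h hu ▸ hv, fun h => hπ.eq_of_mem hW hU h hv ▸ hu⟩
  have hunit : ∀ W ∈ π, e ∈ W → W = {e} := fun W hW h =>
    hπ.eq_of_mem hW he h (mem_singleton_self e)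
  simp only [affineAlgebra]
  by_cases heU : e ∈ U
  · rw [hunit U hU heU, mem_singleton] at hu hv
    rw [hu, hv]
  have hue : u ≠ e := fun h => heU (h ▸ hu)
  have hve : v ≠ e := fun h => heU (h ▸ hv)
  by_cases heS : e ∈ S
  · simp [hunit S hS heS, affineConst, hmem T hT]
  by_cases heT : e ∈ T
  · simp [hunit T hT heT, affineConst_unit_right, hmem S hS]
  simp only [sum_sum_affineConst heS heT hue, sum_sum_affineConst heS heT hve, hmem S hS,
    hmem T hT]

variable [Fintype X]

lemma sum_affineDeg (e : X) (q : ℝ) :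
    ∑ x, affineDeg e q x = 1 + ((Fintype.card X - 1 : ℕ) : ℝ) * q := by
  rw [← add_sum_erase _ _ (mem_univ e),
    sum_congr rfl fun x hx => affineDeg_of_ne (ne_of_mem_erase hx)]
  simp [affineDeg]

lemma cast_card_sub_one_eq (hq : q ≠ 0) (hn : ∑ x, affineDeg e q x - 1 = q ^ 2 - 2 * ε * q) :
    ((Fintype.card X - 1 : ℕ) : ℝ) = q - 2 * ε := by
  rw [sum_affineDeg] at hn
  exact mul_right_cancel₀ hq (by linear_combination hn)

lemma sum_erase_affineConst (hε : ε = -1 ∨ ε = 1)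
    (hX : ((Fintype.card X - 1 : ℕ) : ℝ) = q - 2 * ε) {r s : X} (hr : r ≠ e) (hs : s ≠ e) :
    ∑ t ∈ univ.erase e, affineConst e q ε r s t = q - if r = s then 1 else 0 := by
  rw [sum_congr rfl fun t ht => affineConst_of_ne hr hs (ne_of_mem_erase ht)]
  rcases eq_or_ne r s with rfl | hrs
  · simp [sum_add_distrib, ← mul_sum, hX, hr, sum_ite_eq]
    rcases hε with rfl | rfl <;> ring
  · simp [sum_add_distrib, ← mul_sum, hX, hr, hs, hrs, sum_ite_eq]
    rcases hε with rfl | rfl <;> ring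

lemma sum_erase_affineChar (hε : ε = -1 ∨ ε = 1)
    (hX : ((Fintype.card X - 1 : ℕ) : ℝ) = q - 2 * ε) {u : X} (hu : u ≠ e) :
    ∑ y ∈ univ.erase e, affineChar e q ε y u = -1 := by
  rw [sum_congr rfl fun y hy => affineChar_of_ne (ne_of_mem_erase hy) hu]
  simp [sum_add_distrib, hX, hu, eq_comm]
  rcases hε with rfl | rfl <;> ring

lemma sum_erase_affineChar_mul (hε : ε = -1 ∨ ε = 1)
    (hX : ((Fintype.card X - 1 : ℕ) : ℝ) = q - 2 * ε) {u u' : X} (hu : u ≠ e) (hu' : u' ≠ e) :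
    ∑ y ∈ univ.erase e, affineChar e q ε y u * affineChar e q ε y u' =
      -q + if u = u' then (q - ε) ^ 2 else 0 := by
  rw [sum_congr rfl fun y hy => by
    rw [affineChar_of_ne (ne_of_mem_erase hy) hu, affineChar_of_ne (ne_of_mem_erase hy) hu']]
  rcases eq_or_ne u u' with rfl | huu
  · simp [add_mul, mul_add, sum_add_distrib, hX, hu, eq_comm]
    rcases hε with rfl | rfl <;> ring
  · simp [add_mul, mul_add, sum_add_distrib, hX, hu, hu', huu, eq_comm, ite_mul, mul_ite]
    rcases hε with rfl | rfl <;> ring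

lemma sum_affineConst_mul_affineChar (hε : ε = -1 ∨ ε = 1)
    (hX : ((Fintype.card X - 1 : ℕ) : ℝ) = q - 2 * ε) (y r s : X) :
    ∑ t, affineConst e q ε r s t * affineChar e q ε y t =
      affineChar e q ε y r * affineChar e q ε y s := by
  rcases eq_or_ne r e with hr | hr
  · subst r
    simp [affineConst, affineChar_unit]
  rcases eq_or_ne s e with hs | hs
  · subst s
    simp [affineConst, hr, affineChar_unit]
  rw [← add_sum_erase _ _ (mem_univ e)]
  rcases eq_or_ne y e with hy | hy
  · subst y
    rw [sum_congr rfl fun t ht => by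
      rw [affineChar, if_pos rfl, affineDeg_of_ne (ne_of_mem_erase ht), mul_comm],
      ← mul_sum, sum_erase_affineConst hε hX hr hs]
    simp [affineConst, affineChar, affineDeg, hr, hs]
    split_ifs <;> ring
  · rw [sum_congr rfl fun t ht => by rw [affineChar_of_ne hy (ne_of_mem_erase ht)]]
    simp only [mul_add, mul_ite, mul_zero, sum_add_distrib, ← sum_mul, sum_ite_eq', mem_erase,
      mem_univ, and_true, ne_eq, hy, not_false_eq_true, if_true, sum_erase_affineConst hε hX hr hs,
      affineConst_of_ne hr hs hy, affineChar_unit, affineChar_of_ne hy hr, affineChar_of_ne hy hs]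
    simp only [affineConst, hr, hs, if_false]
    split_ifs <;> subst_vars <;> rcases hε with rfl | rfl <;> first | ring1 | tauto

lemma sum_affineDeg_mul_affineChar_mul (hε : ε = -1 ∨ ε = 1)
    (hX : ((Fintype.card X - 1 : ℕ) : ℝ) = q - 2 * ε) (u u' : X) :
    ∑ y, affineDeg e q y * (affineChar e q ε y u * affineChar e q ε y u') =
      if u = u' then (q - ε) ^ 2 * affineDeg e q u else 0 := by
  rw [← add_sum_erase _ _ (mem_univ e),
    sum_congr rfl fun y hy => by rw [affineDeg_of_ne (ne_of_mem_erase hy)], ← mul_sum]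
  rcases eq_or_ne u e with hu | hu <;> rcases eq_or_ne u' e with hu' | hu' <;> try subst u
  all_goals try subst u'
  · simp [affineChar, affineDeg, hX]
    rcases hε with rfl | rfl <;> ring
  · simp only [affineChar_unit, one_mul, sum_erase_affineChar hε hX hu']
    simp [affineChar, affineDeg, hu', Ne.symm hu']
  · simp only [affineChar_unit, mul_one, sum_erase_affineChar hε hX hu]
    simp [affineChar, affineDeg, hu]
  · rw [sum_erase_affineChar_mul hε hX hu hu']
    simp [affineChar, affineDeg, hu, hu']
    split_ifs <;> ring

theorem isCAlgebra_affineAlgebra (hq : 0 < q) (hε : ε = -1 ∨ ε = 1)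
    (hX : ((Fintype.card X - 1 : ℕ) : ℝ) = q - 2 * ε) : IsCAlgebra (affineAlgebra e q ε) := by
  have hmul := sum_affineConst_mul_affineChar (e := e) hε hX
  have hqε : q ≠ ε := by
    rintro rfl
    have := Nat.cast_nonneg (α := ℝ) (Fintype.card X - 1)
    linarith
  have hN (u : X) : (q - ε) ^ 2 * affineDeg e q u ≠ 0 := by
    have := affineDeg_pos (e := e) hq u
    have : q - ε ≠ 0 := sub_ne_zero.2 hqε
    positivity
  refine ⟨rfl, fun _ => rfl, affineDeg_pos hq, fun s t => by simp [affineAlgebra, affineConst],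
    fun r t => ?_, assoc_of_orthogonal_chars hmul (sum_affineDeg_mul_affineChar_mul hε hX) hN,
    fun r s t => affineConst_comm r s t, fun r s => ?_, by simp [affineAlgebra, affineDeg],
    fun _ => rfl, fun r s => ?_⟩
  · by_cases hr : r = e <;> simp [affineAlgebra, affineConst, hr]
  · by_cases hr : r = e
    · subst hr; simp [affineAlgebra, affineConst, affineDeg]
    by_cases hs : s = e
    · subst hs; simp [affineAlgebra, affineConst, hr, Ne.symm hr]
    · simp [affineAlgebra, affineConst, affineDeg, hr, hs, eq_comm]
  · simpa [affineAlgebra, affineChar, mul_comm] using hmul e r s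

end AffineAlgebra

section CAlgebra

variable {R : Type*} [DecidableEq R]

/-- The fibres of `splitAt e r` are the classes `{e}`, `{r}` and `R \ {e, r}`. -/
def splitAt (e r x : R) : Fin 3 := if x = e then 0 else if x = r then 1 else 2

lemma splitAt_eq_two {e r x : R} (hxe : x ≠ e) (hxr : x ≠ r) : splitAt e r x = 2 := by
  simp [splitAt, hxe, hxr]

variable [Fintype R] {A : CAlgebraData R}

lemma IsCAlgebra.d_pos (hA : IsCAlgebra A) (r : R) : 0 < A.d r := hA.2.2.1 r

lemma IsCAlgebra.c_unit_left (hA : IsCAlgebra A) (s t : R) :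
    A.c A.e s t = if s = t then 1 else 0 :=
  hA.2.2.2.1 s t

lemma IsCAlgebra.c_unit_right (hA : IsCAlgebra A) (r t : R) :
    A.c r A.e t = if r = t then 1 else 0 :=
  hA.2.2.2.2.1 r t

lemma IsCAlgebra.assoc (hA : IsCAlgebra A) (r s t u : R) :
    ∑ v, A.c r s v * A.c v t u = ∑ v, A.c r v u * A.c s t v :=
  hA.2.2.2.2.2.1 r s t u

lemma IsCAlgebra.d_unit (hA : IsCAlgebra A) : A.d A.e = 1 := hA.2.2.2.2.2.2.2.2.1

lemma IsCAlgebra.sum_d_mul_c (hA : IsCAlgebra A) (r s : R) :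
    ∑ t, A.d t * A.c r s t = A.d r * A.d s :=
  hA.2.2.2.2.2.2.2.2.2.2 r s

def splitPartition (e r : R) : Finset (Finset R) :=
  univ.image fun i => ({x | splitAt e r x = i} : Finset R)

lemma fiber_splitAt_mem (e r : R) (i : Fin 3) :
    ({x | splitAt e r x = i} : Finset R) ∈ splitPartition e r :=
  mem_image_of_mem _ (mem_univ i)

lemma fiber_splitAt_zero (e r : R) : ({x | splitAt e r x = 0} : Finset R) = {e} := by
  ext x; rw [mem_filter_univ, mem_singleton, splitAt]; split_ifs <;> simp_all

lemma fiber_splitAt_one {e r : R} (hr : r ≠ e) : ({x | splitAt e r x = 1} : Finset R) = {r} := by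
  ext x; rw [mem_filter_univ, mem_singleton, splitAt]; split_ifs <;> simp_all [eq_comm]

lemma isPartition_splitPartition (hR : 4 ≤ Fintype.card R) {e r : R} (hr : r ≠ e) :
    IsPartition (splitPartition e r) := by
  refine isPartition_image_fiber fun i => ?_
  obtain ⟨z, hze, hzr, -⟩ := exists_ne_of_four_le_card hR e r r
  fin_cases i
  · exact ⟨e, by simp [splitAt]⟩
  · exact ⟨r, by simp [splitAt, hr]⟩
  · exact ⟨z, splitAt_eq_two hze hzr⟩

lemma IsCAlgebra.inv_eq_self (hA : IsCAlgebra A) (hR : 4 ≤ Fintype.card R) (ham : IsAmorphic A)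
    (r : R) : A.inv r = r := by
  obtain ⟨hinv_e, hinv_inv, -⟩ := hA
  by_cases hr : r = A.e
  · rw [hr, hinv_e]
  have hπ := ham _ (isPartition_splitPartition hR hr)
    (fiber_splitAt_zero A.e r ▸ fiber_splitAt_mem A.e r 0)
  have h := hπ.1 {r} (fiber_splitAt_one hr ▸ fiber_splitAt_mem A.e r 1)
  rw [image_singleton] at h
  obtain ⟨i, -, hi⟩ := mem_image.1 h
  by_contra hne
  have hie : A.inv r ≠ A.e := fun h' => hr (by rw [← hinv_inv r, h', hinv_e])
  obtain ⟨z, hze, hzr, hzi⟩ := exists_ne_of_four_le_card hR A.e r (A.inv r)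
  have hsplit : splitAt A.e r z = i := by
    have : A.inv r ∈ ({x | splitAt A.e r x = i} : Finset R) := hi ▸ mem_singleton_self _
    rw [← (mem_filter_univ _).1 this, splitAt_eq_two hze hzr, splitAt_eq_two hie hne]
  exact hzi (mem_singleton.1 (hi ▸ (mem_filter_univ _).2 hsplit))

lemma IsAmorphic.c_self_eq (ham : IsAmorphic A) (hR : 4 ≤ Fintype.card R) {r u v : R}
    (hr : r ≠ A.e) (hu : u ≠ A.e) (hur : u ≠ r) (hv : v ≠ A.e) (hvr : v ≠ r) :
    A.c r r u = A.c r r v := by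
  have hr1 := fiber_splitAt_one hr ▸ fiber_splitAt_mem A.e r 1
  have h := (ham _ (isPartition_splitPartition hR hr)
    (fiber_splitAt_zero A.e r ▸ fiber_splitAt_mem A.e r 0)).2 {r} hr1 {r} hr1 _
    (fiber_splitAt_mem A.e r 2) u ((mem_filter_univ _).2 (splitAt_eq_two hu hur)) v
    ((mem_filter_univ _).2 (splitAt_eq_two hv hvr))
  simpa using h

lemma IsCAlgebra.c_comm (hA : IsCAlgebra A) (hinv : ∀ r, A.inv r = r) (r s t : R) :
    A.c r s t = A.c s r t := by
  obtain ⟨-, -, -, -, -, -, hanti, -⟩ := hA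
  rw [hanti, hinv, hinv, hinv]

lemma IsCAlgebra.c_unit (hA : IsCAlgebra A) (hinv : ∀ r, A.inv r = r) (r s : R) :
    A.c r s A.e = if s = r then A.d r else 0 := by
  obtain ⟨-, -, -, -, -, -, -, hunit, -⟩ := hA
  rw [hunit, hinv]

lemma IsCAlgebra.d_mul_c (hA : IsCAlgebra A) (hinv : ∀ r, A.inv r = r) (r s t : R) :
    A.d t * A.c r s t = A.d r * A.c s t r := by
  have h := hA.assoc r s t A.e
  simp only [hA.c_unit hinv, mul_ite, ite_mul, mul_zero, zero_mul, sum_ite_eq, sum_ite_eq',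
    mem_univ, if_true] at h
  rw [mul_comm, h, mul_comm]

end CAlgebra

section Sign

variable {R : Type*} [Fintype R] [DecidableEq R] {A : CAlgebraData R} {q ε : ℝ}

lemma IsCAlgebra.c_self_add_c_self (hA : IsCAlgebra A) (hinv : ∀ r, A.inv r = r)
    (hoff : ∀ r s t, r ≠ A.e → s ≠ A.e → t ≠ A.e → r ≠ s → s ≠ t → r ≠ t →
      A.c r s t = A.d r * A.d s / q ^ 2)
    {a b : R} (ha : a ≠ A.e) (hb : b ≠ A.e) (hab : a ≠ b) :
    A.d b * A.c a a b + A.d a * A.c b b a =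
      A.d a * A.d b - (A.degree - 1 - A.d a - A.d b) * (A.d a * A.d b / q ^ 2) := by
  have h := hA.sum_d_mul_c a b
  rw [sum_mul_eq_of_eq_off {A.e, a, b} fun t ht => by
      simp only [mem_insert, mem_singleton, not_or] at ht
      exact hoff a b t ha hb ht.1 hab (Ne.symm ht.2.2) (Ne.symm ht.2.1),
    sum_insert (by simp [Ne.symm ha, Ne.symm hb]), sum_insert (by simp [hab]), sum_singleton,
    hA.c_unit hinv, if_neg (Ne.symm hab), hA.d_unit] at h
  have ha' : A.d a * A.c a b a = A.d b * A.c a a b := by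
    rw [hA.c_comm hinv, hA.d_mul_c hinv]
  have hb' : A.d b * A.c a b b = A.d a * A.c b b a := hA.d_mul_c hinv a b b
  rw [CAlgebraData.degree]
  linear_combination h - ha' - hb'

lemma IsCAlgebra.c_self_of_ne (hA : IsCAlgebra A) (hinv : ∀ r, A.inv r = r)
    (hR : 4 ≤ Fintype.card R) (ham : IsAmorphic A)
    (hoff : ∀ r s t, r ≠ A.e → s ≠ A.e → t ≠ A.e → r ≠ s → s ≠ t → r ≠ t →
      A.c r s t = A.d r * A.d s / q ^ 2)
    (hq : q ≠ 0) (hn : A.degree - 1 = q ^ 2 - 2 * ε * q) {r u : R} (hr : r ≠ A.e)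
    (hu : u ≠ A.e) (hur : u ≠ r) : A.c r r u = A.d r * (A.d r + ε * q) / q ^ 2 := by
  obtain ⟨z, hze, hzr, hzu⟩ := exists_ne_of_four_le_card hR A.e r u
  have hru := hA.c_self_add_c_self hinv hoff hr hu (Ne.symm hur)
  have hrz := hA.c_self_add_c_self hinv hoff hr hze (Ne.symm hzr)
  have huz := hA.c_self_add_c_self hinv hoff hu hze (Ne.symm hzu)
  rw [ham.c_self_eq hR hr hze hzr hu hur, ham.c_self_eq hR hze hr (Ne.symm hzr) hu (Ne.symm hzu)]
    at hrz
  rw [ham.c_self_eq hR hu hze hzu hr (Ne.symm hur)] at huz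
  rw [hn] at hru hrz huz
  have hdu := hA.d_pos u
  have hdz := hA.d_pos z
  refine mul_left_cancel₀ (by positivity : 2 * A.d u * A.d z ≠ 0) ?_
  linear_combination (norm := (field_simp; ring)) A.d z * hru + A.d u * hrz - A.d r * huz

lemma IsCAlgebra.c_self_self (hA : IsCAlgebra A) (hinv : ∀ r, A.inv r = r)
    (hq : q ≠ 0) (hn : A.degree - 1 = q ^ 2 - 2 * ε * q) (hε : ε ^ 2 = 1) {r : R}
    (hr : r ≠ A.e) (hself : ∀ u, u ≠ A.e → u ≠ r → A.c r r u = A.d r * (A.d r + ε * q) / q ^ 2) :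
    A.c r r r = A.d r ^ 2 / q ^ 2 + 3 * ε * A.d r / q + 1 - ε * q := by
  have h := hA.sum_d_mul_c r r
  rw [sum_mul_eq_of_eq_off {A.e, r} fun t ht => by
      simp only [mem_insert, mem_singleton, not_or] at ht
      exact hself t ht.1 ht.2,
    sum_insert (by simp [Ne.symm hr]), sum_singleton, hA.c_unit hinv, if_pos rfl, hA.d_unit] at h
  rw [CAlgebraData.degree] at hn
  refine mul_left_cancel₀ (hA.d_pos r).ne' ?_
  linear_combination (norm := (field_simp; ring))
    h - A.d r * (A.d r + ε * q) / q ^ 2 * hn + 2 * A.d r * hε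

/-- The structure constants, on `R^#`, of the fusion of `affineAlgebra` along classes of sizes
`d r / q`. -/
noncomputable def fusionConst (d : R → ℝ) (q ε : ℝ) (r s t : R) : ℝ :=
  d r * d s / q ^ 2
    + ε * ((if r = t then d s else 0) + (if s = t then d r else 0) + (if r = s then d r else 0)) / q
    + if r = t ∧ s = t then 1 - ε * q else 0

lemma IsCAlgebra.c_eq_fusionConst (hA : IsCAlgebra A) (hinv : ∀ r, A.inv r = r)
    (hR : 4 ≤ Fintype.card R) (ham : IsAmorphic A)
    (hoff : ∀ r s t, r ≠ A.e → s ≠ A.e → t ≠ A.e → r ≠ s → s ≠ t → r ≠ t →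
      A.c r s t = A.d r * A.d s / q ^ 2)
    (hq : q ≠ 0) (hn : A.degree - 1 = q ^ 2 - 2 * ε * q) (hε : ε ^ 2 = 1) {r s t : R}
    (hr : r ≠ A.e) (hs : s ≠ A.e) (ht : t ≠ A.e) : A.c r s t = fusionConst A.d q ε r s t := by
  rw [fusionConst]
  have hself {r u : R} (hr : r ≠ A.e) (hu : u ≠ A.e) (hur : u ≠ r) :=
    hA.c_self_of_ne hinv hR ham hoff hq hn hr hu hur
  have hpair {r s : R} (hr : r ≠ A.e) (hs : s ≠ A.e) (hrs : r ≠ s) :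
      A.c r s s = A.d r * (A.d s + ε * q) / q ^ 2 := by
    refine mul_left_cancel₀ (hA.d_pos s).ne' ?_
    rw [hA.d_mul_c hinv, hself hs hr hrs]
    ring
  by_cases hrs : r = s
  · subst s
    by_cases htr : r = t
    · subst t
      rw [hA.c_self_self hinv hq hn hε hr fun u hu hur => hself hr hu hur]
      simp only [if_true, and_self]
      field_simp
      ring
    · rw [hself hr ht (Ne.symm htr)]
      simp only [htr, if_false, if_true, false_and]
      field_simp
      ring
  · by_cases htr : r = t
    · subst t
      rw [hA.c_comm hinv, hpair hs hr (Ne.symm hrs)]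
      simp only [hrs, Ne.symm hrs, if_true, if_false, and_false]
      field_simp
      ring
    by_cases hts : s = t
    · subst t
      rw [hpair hr hs hrs]
      simp only [hrs, if_true, if_false, false_and]
      field_simp
      ring
    · rw [hoff r s t hr hs ht hrs hts htr]
      simp [hrs, htr, hts]

lemma exists_d_eq_nat_mul (hR : 4 ≤ Fintype.card R) (hq : 0 < q) (hε : ε = -1 ∨ ε = 1)
    (hint : ∀ r s t, ∃ k : ℤ, A.c r s t = k)
    (hcoef : ∀ r s t, r ≠ A.e → s ≠ A.e → t ≠ A.e → A.c r s t = fusionConst A.d q ε r s t)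
    {r : R} (hr : r ≠ A.e) (hdr : 0 < A.d r) : ∃ m : ℕ, A.d r = m * q := by
  obtain ⟨s, hse, hsr, -⟩ := exists_ne_of_four_le_card hR A.e r r
  obtain ⟨t, hte, htr, hts⟩ := exists_ne_of_four_le_card hR A.e r s
  obtain ⟨k₁, hk₁⟩ := hint r s s
  obtain ⟨k₂, hk₂⟩ := hint r s t
  have hdiff : ((k₁ - k₂ : ℤ) : ℝ) = ε * (A.d r / q) := by
    rw [Int.cast_sub, ← hk₁, ← hk₂, hcoef r s s hr hse hse, hcoef r s t hr hse hte, fusionConst,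
      fusionConst]
    simp [Ne.symm hsr, Ne.symm htr, Ne.symm hts]
    ring
  obtain ⟨z, hz⟩ : ∃ z : ℤ, (z : ℝ) = A.d r / q := by
    rcases hε with rfl | rfl
    · exact ⟨-(k₁ - k₂), by rw [Int.cast_neg, hdiff]; ring⟩
    · exact ⟨k₁ - k₂, by rw [hdiff]; ring⟩
  have hz0 : 0 ≤ z := by exact_mod_cast hz ▸ (div_pos hdr hq).le
  lift z to ℕ using hz0
  exact ⟨z, by rw [Int.cast_natCast] at hz; rw [hz]; field_simp⟩

end Sign

section Fusion

variable {R : Type*} [Fintype R] [DecidableEq R] {A : CAlgebraData R} {q ε : ℝ}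
  {X : Type*} [Fintype X] [DecidableEq X] {pr : X → R} {e' : X}

lemma IsCAlgebra.c_eq_sum_sum_affineConst (hA : IsCAlgebra A) (hinv : ∀ r, A.inv r = r)
    (hq : q ≠ 0)
    (hcoef : ∀ r s t, r ≠ A.e → s ≠ A.e → t ≠ A.e → A.c r s t = fusionConst A.d q ε r s t)
    (hfiber : ({u | pr u = A.e} : Finset X) = {e'})
    (hd : ∀ r, r ≠ A.e → A.d r = #{u | pr u = r} * q) {r s t : R} {w : X} (hw : pr w = t) :
    A.c r s t = ∑ u ∈ {u | pr u = r}, ∑ v ∈ {v | pr v = s}, affineConst e' q ε u v w := by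
  have he' (u : X) : pr u = A.e ↔ u = e' := by simpa using congrArg (u ∈ ·) hfiber
  have hnotMem {r : R} (hr : r ≠ A.e) : e' ∉ ({u | pr u = r} : Finset X) := by
    simp only [mem_filter_univ]
    exact fun h => hr (h ▸ (he' e').2 rfl)
  have hmem (r : R) : w ∈ ({u | pr u = r} : Finset X) ↔ r = t := by simp [hw, eq_comm]
  by_cases hr : r = A.e
  · subst hr
    simp [hfiber, hA.c_unit_left, affineConst, hmem]
  by_cases hs : s = A.e
  · subst hs
    simp [hfiber, hA.c_unit_right, affineConst_unit_right, hmem]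
  by_cases ht : t = A.e
  · have hwe : w = e' := (he' w).1 (hw.trans ht)
    subst ht hwe
    rw [sum_sum_affineConst_unit (hnotMem hr) (hnotMem hs), card_fiber_inter_fiber,
      hA.c_unit hinv]
    by_cases h : r = s
    · simp [h, hd s hs, mul_comm]
    · simp [h, Ne.symm h]
  rw [hcoef r s t hr hs ht, sum_sum_affineConst (hnotMem hr) (hnotMem hs)
    (fun h => ht (by rw [← hw, h, he'])), card_fiber_inter_fiber, fusionConst, hd r hr, hd s hs]
  simp only [hmem, Nat.cast_ite, Nat.cast_zero]
  split_ifs <;> field_simp <;> ring1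

lemma IsCAlgebra.d_eq_sum_affineDeg (hA : IsCAlgebra A)
    (hfiber : ({u | pr u = A.e} : Finset X) = {e'})
    (hd : ∀ r, r ≠ A.e → A.d r = #{u | pr u = r} * q) (r : R) :
    A.d r = ∑ u ∈ {u | pr u = r}, affineDeg e' q u := by
  by_cases hr : r = A.e
  · simp [hr, hfiber, affineDeg, hA.d_unit]
  rw [sum_congr rfl fun u hu => affineDeg_of_ne fun h => hr ?_, sum_const, nsmul_eq_mul, hd r hr]
  rw [← (mem_filter_univ u).1 hu, h]
  exact (mem_filter_univ e').1 (hfiber ▸ mem_singleton_self e')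

end Fusion

lemma sub_one_eq_of_sq_eq_one {n ε : ℝ} (hn : 0 ≤ n) (hε : ε ^ 2 = 1) :
    n - 1 = (√n + ε) ^ 2 - 2 * ε * (√n + ε) := by
  linear_combination -(Real.sq_sqrt hn) + hε

/-- any nontrivial amorphic `C`-algebra with integer structure constants is a
fusion of a generalized affine `C`-algebra, i.e. of a nontrivial amorphic homogeneous
`C`-algebra of the same degree `n` with common degree `√n + ε`. -/
theorem stmt_7 {R : Type*} [Fintype R] [DecidableEq R] (A : CAlgebraData R)
    (hA : IsCAlgebra A) (hnt : 4 ≤ Fintype.card R) (ham : IsAmorphic A)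
    (hint : ∀ r s t, ∃ k : ℤ, A.c r s t = k)
    (ε : ℝ) (hε : IsSign A ε) :
    ∃ (R' : Type) (fR' : Fintype R') (dR' : DecidableEq R') (A' : CAlgebraData R')
      (π' : Finset (Finset R')) (φ : R → Finset R'),
      @IsCAlgebra R' fR' dR' A' ∧
      4 ≤ @Fintype.card R' fR' ∧
      @IsAmorphic R' fR' dR' A' ∧
      @CAlgebraData.degree R' fR' A' = A.degree ∧
      (∀ u, u ≠ A'.e → A'.d u = Real.sqrt A.degree + ε) ∧
      @IsPartition R' fR' π' ∧ ({A'.e} : Finset R') ∈ π' ∧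
      (∀ r, φ r ∈ π') ∧ Function.Injective φ ∧ (∀ S ∈ π', ∃ r, φ r = S) ∧
      φ A.e = {A'.e} ∧
      (∀ r, A.d r = ∑ u ∈ φ r, A'.d u) ∧
      (∀ r s t, ∀ w ∈ φ t, A.c r s t = ∑ u ∈ φ r, ∑ v ∈ φ s, A'.c u v w) := by
  obtain ⟨hε, hq, hoff⟩ := hε
  set q := Real.sqrt A.degree + ε
  have hinv := hA.inv_eq_self hnt ham
  have hε2 : ε ^ 2 = 1 := by rcases hε with rfl | rfl <;> norm_num
  have hn : A.degree - 1 = q ^ 2 - 2 * ε * q :=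
    sub_one_eq_of_sq_eq_one (sum_nonneg fun r _ => (hA.d_pos r).le) hε2
  have hcoef : ∀ r s t, r ≠ A.e → s ≠ A.e → t ≠ A.e → A.c r s t = fusionConst A.d q ε r s t :=
    fun r s t => hA.c_eq_fusionConst hinv hnt ham hoff hq.ne' hn hε2
  choose! m hm using fun r (hr : r ≠ A.e) =>
    exists_d_eq_nat_mul hnt hq hε hint hcoef hr (hA.d_pos r)
  obtain ⟨N, pr, e', hfiber, hpr⟩ := exists_fin_fibration A.e m
  have hd r (hr : r ≠ A.e) : A.d r = #{u | pr u = r} * q := by rw [hpr r hr, hm r hr]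
  have hdsum := hA.d_eq_sum_affineDeg hfiber hd
  have hsurj : Function.Surjective pr := fun r => by
    obtain ⟨u, hu⟩ := nonempty_of_sum_ne_zero (hdsum r ▸ (hA.d_pos r).ne')
    exact ⟨u, (mem_filter_univ u).1 hu⟩
  have hdeg : (affineAlgebra e' q ε).degree = A.degree := by
    rw [CAlgebraData.degree, CAlgebraData.degree, ← sum_fiberwise univ pr]
    exact sum_congr rfl fun r _ => (hdsum r).symm
  refine ⟨Fin N, inferInstance, inferInstance, affineAlgebra e' q ε,
    univ.image fun r => ({u | pr u = r} : Finset (Fin N)), fun r => {u | pr u = r},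
    isCAlgebra_affineAlgebra hq hε (cast_card_sub_one_eq hq.ne' (hdeg ▸ hn)),
    hnt.trans (Fintype.card_le_of_surjective pr hsurj), isAmorphic_affineAlgebra, hdeg,
    fun u => affineDeg_of_ne, isPartition_image_fiber hsurj,
    hfiber ▸ mem_image_of_mem _ (mem_univ _), fun r => mem_image_of_mem _ (mem_univ r),
    fiber_injective hsurj, fun S hS => ?_, hfiber, hdsum, fun r s t w hw =>
      hA.c_eq_sum_sum_affineConst hinv hq.ne' hcoef hfiber hd ((mem_filter_univ w).1 hw)⟩
  obtain ⟨r, -, rfl⟩ := mem_image.1 hS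
  exact ⟨r, rfl⟩
end

section
/- Let R be a finite set with |R| ≥ 4, let e ∈ R, let d : R → ℝ satisfy d_e = 1 and d_r > 0 for all r ∈ R, and let ε ∈ {−1, 1}. Set n = Σ_{r∈R} d_r, Q = (√n + ε)², and d'_r = n − 1 − d_r, and define c : R × R × R → ℝ by: c_{e,s}^t = δ_{s,t}; c_{r,e}^t = δ_{r,t}; for r, s ∈ R^#, c_{r,s}^e = d_r if r = s and 0 otherwise; and for r, s, t ∈ R^#: c_{r,s}^t = d_r d_s / Q if r, s, t are pairwise distinct; c_{r,r}^t = (d_r/2)(1 + (d_r − d'_r)/Q) if t ≠ r; c_{r,s}^r = (d_s/2)(1 + (d_r − d'_r)/Q) and c_{r,s}^s = (d_r/2)(1 + (d_s − d'_s)/Q) if r ≠ s; and c_{r,r}^r = −(d'_r/2)(1 + (d_r − d'_r)/Q) + d_r − 1. Then (R, e, id, d, c), with the identity involution, is a symmetric nontrivial amorphic C-algebra. -/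
open Finset

/- ======================================================================= -/
/- Auxiliary material for the proof of `stmt_8`.                           -/
/- ======================================================================= -/

/-- Numerator of the closed form of the structure constants on `R^#`:
`c r t u = Ncf d s ε r t u / (s + ε)^2` for `r, t, u ≠ e`, where `s = √n`. -/
private def Ncf {R : Type*} [DecidableEq R] (d : R → ℝ) (s ε : ℝ) (r t u : R) : ℝ :=
  d r * d t + (if r = t then ε * (s + ε) else 0) * d r
  + (if u = r then ε * (s + ε) else 0) * d t
  + (if u = t then ε * (s + ε) else 0) * d r
  + (if r = t then (if u = t then (1:ℝ) else 0) else 0) * (-(ε * s) * (s + ε) ^ 2)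

/-- Closed form of `∑_{v ≠ e} Ncf a b v * Ncf v p q`, with `D = ∑_{v ≠ e} d v`. -/
private def KeyP {R : Type*} [DecidableEq R] (d : R → ℝ) (s ε D : ℝ) (a b p q : R) : ℝ :=
  (d a * d b + (if a = b then ε * (s + ε) else 0) * d a)
      * (d p + (if q = p then ε * (s + ε) else 0)) * D
  + (ε * (s + ε) * d b) * Ncf d s ε a p q
  + (ε * (s + ε) * d a + (if a = b then (1:ℝ) else 0) * (-(ε * s) * (s + ε) ^ 2))
      * Ncf d s ε b p q
  + (d a * d b + (if a = b then ε * (s + ε) else 0) * d a)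
      * (ε * (s + ε) * d p + (if q = p then (1:ℝ) else 0) * (-(ε * s) * (s + ε) ^ 2))
  + (d a * d b + (if a = b then ε * (s + ε) else 0) * d a) * (ε * (s + ε) * d p)

private lemma sum_helper {R : Type*} [DecidableEq R] (E : Finset R) (dd F : R → ℝ)
    (x1 x2 x3 x4 : R) (K0 K1 K2 K3 K4 : ℝ)
    (h1 : x1 ∈ E) (h2 : x2 ∈ E) (h3 : x3 ∈ E) (h4 : x4 ∈ E)
    (hF : ∀ v ∈ E, F v = K0 * dd v + (if v = x1 then K1 else 0) + (if v = x2 then K2 else 0)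
      + (if v = x3 then K3 else 0) + (if x4 = v then K4 else 0)) :
    ∑ v ∈ E, F v = K0 * (∑ v ∈ E, dd v) + K1 + K2 + K3 + K4 := by
  rw [Finset.sum_congr rfl hF]
  simp [Finset.sum_add_distrib, Finset.sum_ite_eq', Finset.sum_ite_eq, h1, h2, h3, h4,
    ← Finset.mul_sum]

private lemma sum_helper2 {R : Type*} [DecidableEq R] (T : Finset R) (dd F : R → ℝ)
    (x1 x2 : R) (C0 K1 K2 : ℝ)
    (hF : ∀ t ∈ T, F t = C0 * dd t + (if x1 = t then K1 else 0) + (if x2 = t then K2 else 0)) :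
    ∑ t ∈ T, F t = C0 * (∑ t ∈ T, dd t)
      + (if x1 ∈ T then K1 else 0) + (if x2 ∈ T then K2 else 0) := by
  rw [Finset.sum_congr rfl hF]
  simp [Finset.sum_add_distrib, Finset.sum_ite_eq, ← Finset.mul_sum]

private lemma sum_helper3 {R : Type*} [DecidableEq R] (S T : Finset R) (dd F G : R → ℝ)
    (x1 : R) (C0 K1 : ℝ)
    (hF : ∀ r ∈ S, F r = C0 * dd r + (if x1 = r then K1 else 0) + (if r ∈ T then G r else 0)) :
    ∑ r ∈ S, F r = C0 * (∑ r ∈ S, dd r) + (if x1 ∈ S then K1 else 0) + ∑ r ∈ S ∩ T, G r := by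
  rw [Finset.sum_congr rfl hF]
  simp [Finset.sum_add_distrib, Finset.sum_ite_eq, ← Finset.mul_sum, Finset.sum_ite_mem]

set_option maxHeartbeats 1000000 in
private lemma ncf_key {R : Type*} [DecidableEq R] (E : Finset R) (d : R → ℝ) (s ε : ℝ)
    (a b p q : R) (ha : a ∈ E) (hb : b ∈ E) (hp : p ∈ E) (hq : q ∈ E) :
    ∑ v ∈ E, Ncf d s ε a b v * Ncf d s ε v p q
      = KeyP d s ε (∑ v ∈ E, d v) a b p q := by
  simp only [KeyP]
  refine sum_helper E d (fun v => Ncf d s ε a b v * Ncf d s ε v p q) a b p q _ _ _ _ _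
    ha hb hp hq ?_
  intro v hv
  show Ncf d s ε a b v * Ncf d s ε v p q = _
  simp only [Ncf]
  by_cases h1 : v = a <;> by_cases h2 : v = b <;> by_cases h3 : v = p <;> by_cases h4 : q = v <;>
    subst_vars <;>
    simp_all only [eq_self_iff_true, if_true, if_false, ite_true, ite_false, not_false_iff] <;>
    (try (split_ifs <;> subst_vars)) <;> first | contradiction | ring

set_option maxHeartbeats 1000000 in
private lemma ncf_c4 {R : Type*} [DecidableEq R] (E : Finset R) (d : R → ℝ) (s ε : ℝ)
    (a b : R) (ha : a ∈ E) (hb : b ∈ E) :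
    ∑ u ∈ E, d u * Ncf d s ε a b u
      = (d a * d b + (if a = b then ε * (s + ε) else 0) * d a) * (∑ u ∈ E, d u)
        + ε * (s + ε) * d b * d a
        + (ε * (s + ε) * d a * d b
            + (if a = b then (1:ℝ) else 0) * (-(ε * s) * (s + ε) ^ 2) * d b)
        + 0 + 0 := by
  refine sum_helper E d (fun u => d u * Ncf d s ε a b u) a b a a _ _ _ _ _
    ha hb ha ha ?_
  intro u hu
  show d u * Ncf d s ε a b u = _
  simp only [Ncf]
  by_cases h1 : u = a <;> by_cases h2 : u = b <;>
    subst_vars <;>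
    simp_all only [eq_self_iff_true, if_true, if_false, ite_true, ite_false, not_false_iff] <;>
    (try (split_ifs <;> subst_vars)) <;> first | contradiction | ring

set_option maxHeartbeats 1000000 in
private lemma amor_inner {R : Type*} [DecidableEq R] (d : R → ℝ) (s ε : ℝ)
    (T : Finset R) (r u : R) :
    ∑ t ∈ T, Ncf d s ε r t u
      = (d r + (if u = r then ε * (s + ε) else 0)) * (∑ t ∈ T, d t)
        + (if r ∈ T then ε * (s + ε) * d r
            + (if u = r then (1:ℝ) else 0) * (-(ε * s) * (s + ε) ^ 2) else 0)
        + (if u ∈ T then ε * (s + ε) * d r else 0) := by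
  refine sum_helper2 T d (fun t => Ncf d s ε r t u) r u _ _ _ ?_
  intro t ht
  show Ncf d s ε r t u = _
  simp only [Ncf]
  by_cases h1 : r = t <;> by_cases h2 : u = t <;>
    subst_vars <;>
    simp_all only [eq_self_iff_true, if_true, if_false, ite_true, ite_false, not_false_iff] <;>
    (try (split_ifs <;> subst_vars)) <;> first | contradiction | ring

set_option maxHeartbeats 1000000 in
private lemma amor_total {R : Type*} [DecidableEq R] (d : R → ℝ) (s ε : ℝ)
    (S T : Finset R) (u : R) :
    ∑ r ∈ S, ∑ t ∈ T, Ncf d s ε r t u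
      = ((∑ t ∈ T, d t) + (if u ∈ T then ε * (s + ε) else 0)) * (∑ r ∈ S, d r)
        + (if u ∈ S then ε * (s + ε) * (∑ t ∈ T, d t) else 0)
        + (ε * (s + ε) * (∑ r ∈ S ∩ T, d r)
            + (if u ∈ S ∩ T then -(ε * s) * (s + ε) ^ 2 else 0)) := by
  rw [Finset.sum_congr rfl fun r _ => amor_inner d s ε T r u]
  have hstep := sum_helper3 S T d
    (fun r => (d r + (if u = r then ε * (s + ε) else 0)) * (∑ t ∈ T, d t)
        + (if r ∈ T then ε * (s + ε) * d r
            + (if u = r then (1:ℝ) else 0) * (-(ε * s) * (s + ε) ^ 2) else 0)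
        + (if u ∈ T then ε * (s + ε) * d r else 0))
    (fun r => ε * (s + ε) * d r + (if u = r then (1:ℝ) else 0) * (-(ε * s) * (s + ε) ^ 2))
    u ((∑ t ∈ T, d t) + (if u ∈ T then ε * (s + ε) else 0))
    (ε * (s + ε) * (∑ t ∈ T, d t)) ?_
  · rw [hstep]
    have hG : ∑ r ∈ S ∩ T,
        (ε * (s + ε) * d r + (if u = r then (1:ℝ) else 0) * (-(ε * s) * (s + ε) ^ 2))
        = ε * (s + ε) * (∑ r ∈ S ∩ T, d r)
          + (if u ∈ S ∩ T then -(ε * s) * (s + ε) ^ 2 else 0) := by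
      rw [Finset.sum_add_distrib, ← Finset.mul_sum]
      congr 1
      simp only [ite_mul, one_mul, zero_mul]
      rw [Finset.sum_ite_eq]
    rw [hG]
  · intro r hr
    by_cases h1 : u = r <;> by_cases h2 : r ∈ T <;> by_cases h3 : u ∈ T <;> subst_vars <;>
      first
      | contradiction
      | (simp_all only [eq_self_iff_true, if_true, if_false, ite_true, ite_false,
          not_false_iff] <;> ring)

set_option maxHeartbeats 2000000 in
private lemma assoc_leafN {R : Type*} [DecidableEq R] (d : R → ℝ) (s ε : ℝ)
    (hε : ε = -1 ∨ ε = 1) (hP : s + ε ≠ 0) (a b p q : R) :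
    (if b = a then d a else 0) * (if p = q then 1 else 0)
      + KeyP d s ε (s ^ 2 - 1) a b p q / (s + ε) ^ 4 =
    (if a = q then 1 else 0) * (if p = b then d b else 0)
      + KeyP d s ε (s ^ 2 - 1) b p a q / (s + ε) ^ 4 := by
  have habs : ∀ X Y A B D : ℝ, D ≠ 0 → X * D + A = Y * D + B → X + A / D = Y + B / D := by
    intro X Y A B D hD h
    field_simp
    linarith
  refine habs _ _ _ _ _ (pow_ne_zero 4 hP) ?_
  simp only [KeyP, Ncf]
  simp only [@eq_comm _ b a, @eq_comm _ p q, @eq_comm _ a q, @eq_comm _ p b, @eq_comm _ p a]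
  rcases hε with rfl | rfl <;>
    split_ifs <;> subst_vars <;> first | contradiction | ring

set_option maxHeartbeats 1000000 in
private lemma ws_leafN {R : Type*} [DecidableEq R] (d : R → ℝ) (s ε : ℝ)
    (hε : ε = -1 ∨ ε = 1) (a b p : R) :
    Ncf d s ε a b p * d p = d a * Ncf d s ε b p a := by
  simp only [Ncf]
  simp only [@eq_comm _ p a, @eq_comm _ p b]
  rcases hε with rfl | rfl <;>
    split_ifs <;> subst_vars <;> first | contradiction | ring

set_option maxHeartbeats 1000000 in
private lemma lem_cfN {R : Type*} [DecidableEq R]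
    (e : R) (d : R → ℝ) (s ε : ℝ) (c : R → R → R → ℝ)
    (hε : ε = -1 ∨ ε = 1) (hP : s + ε ≠ 0)
    (hc : ∀ r t u, c r t u =
      if r = e then (if t = u then 1 else 0)
      else if t = e then (if r = u then 1 else 0)
      else if u = e then (if t = r then d r else 0)
      else if r = t then
        (if u = r then -((s ^ 2 - 1 - d r) / 2) * (1 + (d r - (s ^ 2 - 1 - d r)) / (s + ε) ^ 2)
            + d r - 1
         else d r / 2 * (1 + (d r - (s ^ 2 - 1 - d r)) / (s + ε) ^ 2))
      else if u = r then d t / 2 * (1 + (d r - (s ^ 2 - 1 - d r)) / (s + ε) ^ 2)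
      else if u = t then d r / 2 * (1 + (d t - (s ^ 2 - 1 - d t)) / (s + ε) ^ 2)
      else d r * d t / (s + ε) ^ 2) :
    ∀ r t u, r ≠ e → t ≠ e → u ≠ e →
      c r t u = Ncf d s ε r t u / (s + ε) ^ 2 := by
  intro r t u hr ht hu
  rw [hc]
  simp only [if_neg hr, if_neg ht, if_neg hu, Ncf]
  clear hc
  split_ifs <;> subst_vars <;> first
    | contradiction
    | (rcases hε with rfl | rfl <;> field_simp [hP] <;> ring)

private lemma lem_e1 {R : Type*} [DecidableEq R]
    (e : R) (d : R → ℝ) (s ε : ℝ) (c : R → R → R → ℝ)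
    (hc : ∀ r t u, c r t u =
      if r = e then (if t = u then 1 else 0)
      else if t = e then (if r = u then 1 else 0)
      else if u = e then (if t = r then d r else 0)
      else if r = t then
        (if u = r then -((s ^ 2 - 1 - d r) / 2) * (1 + (d r - (s ^ 2 - 1 - d r)) / (s + ε) ^ 2)
            + d r - 1
         else d r / 2 * (1 + (d r - (s ^ 2 - 1 - d r)) / (s + ε) ^ 2))
      else if u = r then d t / 2 * (1 + (d r - (s ^ 2 - 1 - d r)) / (s + ε) ^ 2)
      else if u = t then d r / 2 * (1 + (d t - (s ^ 2 - 1 - d t)) / (s + ε) ^ 2)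
      else d r * d t / (s + ε) ^ 2) :
    (∀ t u, c e t u = if t = u then 1 else 0) ∧
    (∀ r u, c r e u = if r = u then 1 else 0) ∧
    (∀ r v, r ≠ e → c r v e = if v = r then d r else 0) ∧
    (∀ v p, p ≠ e → c v p e = if p = v then d v else 0) ∧
    (∀ a b p, c a b p = c b a p) := by
  refine ⟨?_, ?_, ?_, ?_, ?_⟩
  · intro t u; rw [hc]; simp
  · intro r u; rw [hc]
    by_cases h : r = e
    · subst h; simp
    · simp [h]
  · intro r v hr; rw [hc]; clear hc
    split_ifs <;> subst_vars <;> first | rfl | contradiction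
  · intro v p hp; rw [hc]; clear hc
    split_ifs <;> subst_vars <;> first | rfl | contradiction
  · intro a b p; rw [hc, hc]; clear hc
    split_ifs <;> subst_vars <;> first | rfl | contradiction | ring

set_option maxHeartbeats 2000000 in
private theorem stmt8_aux {R : Type*} [Fintype R] [DecidableEq R]
    (e : R) (d : R → ℝ) (hde : d e = 1) (hd : ∀ r, 0 < d r)
    (s ε n Q : ℝ) (hε : ε = -1 ∨ ε = 1) (hs : 1 < s)
    (hn : n = s ^ 2) (hQ : Q = (s + ε) ^ 2) (hsum : ∑ r, d r = n)
    (c : R → R → R → ℝ)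
    (hc : ∀ r t u, c r t u =
      if r = e then (if t = u then 1 else 0)
      else if t = e then (if r = u then 1 else 0)
      else if u = e then (if t = r then d r else 0)
      else if r = t then
        (if u = r then -((n - 1 - d r) / 2) * (1 + (d r - (n - 1 - d r)) / Q) + d r - 1
         else d r / 2 * (1 + (d r - (n - 1 - d r)) / Q))
      else if u = r then d t / 2 * (1 + (d r - (n - 1 - d r)) / Q)
      else if u = t then d r / 2 * (1 + (d t - (n - 1 - d t)) / Q)
      else d r * d t / (s + ε) ^ 2) :
    IsCAlgebra (⟨e, id, d, c⟩ : CAlgebraData R) ∧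
      (∀ r : R, (⟨e, id, d, c⟩ : CAlgebraData R).inv r = r) ∧
      IsAmorphic (⟨e, id, d, c⟩ : CAlgebraData R) := by
  subst hn; subst hQ
  have hP : s + ε ≠ 0 := by rcases hε with rfl | rfl <;> intro h <;> linarith
  have hcfN := lem_cfN e d s ε c hε hP hc
  obtain ⟨hc_e1, hc_e2, hc_e3, hc_e4, hcomm⟩ := lem_e1 e d s ε c hc
  clear hc
  have hEd : ∑ v ∈ univ.erase e, d v = s ^ 2 - 1 := by
    have h := Finset.add_sum_erase univ d (mem_univ e)
    rw [hsum] at h; linarith [h, hde]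
  have hmemE : ∀ {x : R}, x ≠ e → x ∈ univ.erase e :=
    fun hx => Finset.mem_erase.mpr ⟨hx, mem_univ _⟩
  -- weighted symmetry
  have hws : ∀ a b p : R, a ≠ e → b ≠ e → p ≠ e → c a b p * d p = d a * c b p a := by
    intro a b p ha hb hp
    rw [hcfN a b p ha hb hp, hcfN b p a hb hp ha, div_mul_eq_mul_div, mul_div_assoc']
    exact congrArg (· / (s + ε) ^ 2) (ws_leafN d s ε hε a b p)
  -- C4
  have hC4 : ∀ a b : R, ∑ u, d u * c a b u = d a * d b := by
    intro a b
    by_cases ha : a = e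
    · rw [ha, hde]
      simp only [hc_e1]
      simp [mul_ite, Finset.sum_ite_eq]
    by_cases hb : b = e
    · rw [hb, hde]
      simp only [hc_e2]
      simp [mul_ite, Finset.sum_ite_eq']
    rw [← Finset.add_sum_erase univ (fun u => d u * c a b u) (mem_univ e)]
    have h1 : ∑ u ∈ univ.erase e, d u * c a b u
        = (∑ u ∈ univ.erase e, d u * Ncf d s ε a b u) / (s + ε) ^ 2 := by
      rw [Finset.sum_div]
      refine Finset.sum_congr rfl fun u hu => ?_
      rw [hcfN a b u ha hb ((Finset.mem_erase.mp hu).1)]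
      ring
    rw [h1, ncf_c4 (univ.erase e) d s ε a b (hmemE ha) (hmemE hb), hEd,
      hc_e3 a b ha, hde]
    clear hcfN hc_e1 hc_e2 hc_e3 hc_e4 hcomm hEd hmemE hws h1 hsum hde hd hs
    simp only [@eq_comm _ b a]
    rcases hε with rfl | rfl <;> field_simp [hP] <;>
      split_ifs <;> subst_vars <;> first | contradiction | ring
  -- associativity
  have hassoc : ∀ a b p q : R, ∑ v, c a b v * c v p q = ∑ v, c a v q * c b p v := by
    intro a b p q
    by_cases ha : a = e
    · rw [ha]
      simp only [hc_e1]
      simp [ite_mul, mul_ite, Finset.sum_ite_eq, Finset.sum_ite_eq']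
    by_cases hb : b = e
    · rw [hb]
      simp only [hc_e1, hc_e2]
      simp [ite_mul, mul_ite, Finset.sum_ite_eq, Finset.sum_ite_eq']
    by_cases hp : p = e
    · rw [hp]
      simp only [hc_e2]
      simp [ite_mul, mul_ite, Finset.sum_ite_eq, Finset.sum_ite_eq']
    by_cases hq : q = e
    · rw [hq]
      have h1 : ∀ v, c v p e = if p = v then d v else 0 := fun v => hc_e4 v p hp
      have h2 : ∀ v, c a v e = if v = a then d a else 0 := fun v => hc_e3 a v ha
      simp only [h1, h2]
      rw [show (∑ v, c a b v * if p = v then d v else 0) = c a b p * d p by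
        simp [mul_ite, mul_zero, Finset.sum_ite_eq]]
      rw [show (∑ v, (if v = a then d a else 0) * c b p v) = d a * c b p a by
        simp [ite_mul, zero_mul, Finset.sum_ite_eq']]
      exact hws a b p ha hb hp
    -- main case
    rw [← Finset.add_sum_erase univ (fun v => c a b v * c v p q) (mem_univ e),
      ← Finset.add_sum_erase univ (fun v => c a v q * c b p v) (mem_univ e)]
    have hL : ∑ v ∈ univ.erase e, c a b v * c v p q
        = KeyP d s ε (s ^ 2 - 1) a b p q / (s + ε) ^ 4 := by
      rw [← hEd, ← ncf_key (univ.erase e) d s ε a b p q (hmemE ha) (hmemE hb)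
        (hmemE hp) (hmemE hq), Finset.sum_div]
      refine Finset.sum_congr rfl fun v hv => ?_
      have hve : v ≠ e := (Finset.mem_erase.mp hv).1
      rw [hcfN a b v ha hb hve, hcfN v p q hve hp hq, div_mul_div_comm, ← pow_add]
    have hR : ∑ v ∈ univ.erase e, c a v q * c b p v
        = KeyP d s ε (s ^ 2 - 1) b p a q / (s + ε) ^ 4 := by
      rw [← hEd, ← ncf_key (univ.erase e) d s ε b p a q (hmemE hb) (hmemE hp)
        (hmemE ha) (hmemE hq), Finset.sum_div]
      refine Finset.sum_congr rfl fun v hv => ?_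
      have hve : v ≠ e := (Finset.mem_erase.mp hv).1
      rw [hcomm a v q, hcfN v a q hve ha hq, hcfN b p v hb hp hve, div_mul_div_comm,
        ← pow_add]
      ring
    show c a b e * c e p q + _ = c a e q * c b p e + _
    rw [hL, hR, hc_e3 a b ha, hc_e1 p q, hc_e2 a q, hc_e4 b p hp]
    exact assoc_leafN d s ε hε hP a b p q
  refine ⟨⟨rfl, fun r => rfl, hd, hc_e1, hc_e2, hassoc, ?_, ?_, hde, fun r => rfl, hC4⟩,
    fun r => rfl, ?_⟩
  · -- anti-automorphism = commutativity
    intro r t u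
    exact hcomm r t u
  · -- C3
    intro r t
    show c r t e = if t = r then d r else 0
    by_cases hr : r = e
    · rw [hr]
      rw [hc_e1]
      split_ifs <;> simp_all [hde]
    · exact hc_e3 r t hr
  · -- amorphic
    intro π hπ hπe
    have huni : ∀ {X Y : Finset R}, X ∈ π → Y ∈ π → ∀ {x : R}, x ∈ X → x ∈ Y → X = Y := by
      intro X Y hX hY x hx hy
      exact (hπ.2 x).unique ⟨hX, hx⟩ ⟨hY, hy⟩
    constructor
    · intro S hS
      show S.image id ∈ π
      simpa using hS
    intro S hS T hT U hU u hu v hv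
    show (∑ r ∈ S, ∑ t ∈ T, c r t u) = ∑ r ∈ S, ∑ t ∈ T, c r t v
    have hmem : ∀ {X : Finset R}, X ∈ π → (u ∈ X ↔ v ∈ X) := by
      intro X hX
      constructor
      · intro h; exact (huni hU hX hu h) ▸ hv
      · intro h; exact (huni hU hX hv h) ▸ hu
    by_cases hue : u = e
    · have hUe : U = {e} := huni hU hπe (hue ▸ hu) (Finset.mem_singleton_self e)
      have hv' : v = e := Finset.mem_singleton.mp (hUe ▸ hv)
      rw [hue, hv']
    by_cases hve : v = e
    · exact absurd
        (Finset.mem_singleton.mp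
          ((huni hU hπe (hve ▸ hv) (Finset.mem_singleton_self e)) ▸ hu)) hue
    have hSe : ∀ {X : Finset R}, X ∈ π → e ∈ X → X = {e} :=
      fun hX hx => huni hX hπe hx (Finset.mem_singleton_self e)
    by_cases hS1 : S = {e}
    · rw [hS1]
      simp only [Finset.sum_singleton, hc_e1]
      simp [Finset.sum_ite_eq', hmem hT]
    by_cases hT1 : T = {e}
    · rw [hT1]
      simp only [Finset.sum_singleton, hc_e2]
      simp [Finset.sum_ite_eq', hmem hS]
    have heS : e ∉ S := fun h => hS1 (hSe hS h)
    have heT : e ∉ T := fun h => hT1 (hSe hT h)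
    have hrw : ∀ w, w ≠ e → ∑ r ∈ S, ∑ t ∈ T, c r t w
        = (∑ r ∈ S, ∑ t ∈ T, Ncf d s ε r t w) / (s + ε) ^ 2 := by
      intro w hw
      rw [Finset.sum_congr rfl fun r hr => Finset.sum_congr rfl fun t ht =>
        hcfN r t w (ne_of_mem_of_not_mem hr heS) (ne_of_mem_of_not_mem ht heT) hw]
      simp only [← Finset.sum_div]
    rw [hrw u hue, hrw v hve, amor_total d s ε S T u, amor_total d s ε S T v]
    simp only [Finset.mem_inter, hmem hS, hmem hT]

/-- the explicit construction `A_ε(R, D)`: given a finite set `R` with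
`|R| ≥ 4`, a unit `e`, positive degrees `d` with `d_e = 1`, and `ε = ±1`, the structure
constants defined by the formulas of Theorem 3.2 yield a symmetric nontrivial amorphic
`C`-algebra. -/
theorem stmt_8 {R : Type*} [Fintype R] [DecidableEq R] (hnt : 4 ≤ Fintype.card R)
    (e : R) (d : R → ℝ) (hde : d e = 1) (hd : ∀ r, 0 < d r)
    (ε : ℝ) (hε : ε = -1 ∨ ε = 1) :
    let n : ℝ := ∑ r, d r
    let Q : ℝ := (Real.sqrt n + ε) ^ 2
    let d' : R → ℝ := fun r => n - 1 - d r
    let c : R → R → R → ℝ := fun r s t =>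
      if r = e then (if s = t then 1 else 0)
      else if s = e then (if r = t then 1 else 0)
      else if t = e then (if s = r then d r else 0)
      else if r = s then
        (if t = r then -(d' r / 2) * (1 + (d r - d' r) / Q) + d r - 1
         else d r / 2 * (1 + (d r - d' r) / Q))
      else if t = r then d s / 2 * (1 + (d r - d' r) / Q)
      else if t = s then d r / 2 * (1 + (d s - d' s) / Q)
      else d r * d s / Q
    let A : CAlgebraData R := ⟨e, id, d, c⟩
    IsCAlgebra A ∧ (∀ r, A.inv r = r) ∧ IsAmorphic A := by
  intro n Q d' c A
  have hn0 : (0:ℝ) ≤ ∑ r, d r := Finset.sum_nonneg fun r _ => (hd r).le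
  have hne : (univ.erase e).Nonempty := by
    rw [← Finset.card_pos, Finset.card_erase_of_mem (mem_univ e), Finset.card_univ]
    omega
  have hn1 : (1:ℝ) < ∑ r, d r := by
    have h := Finset.add_sum_erase univ d (mem_univ e)
    have hpos : 0 < ∑ r ∈ univ.erase e, d r := Finset.sum_pos (fun i _ => hd i) hne
    rw [← h, hde]; linarith
  have hs : 1 < Real.sqrt (∑ r, d r) := by
    rw [show (1:ℝ) = Real.sqrt 1 from Real.sqrt_one.symm]
    exact Real.sqrt_lt_sqrt (by norm_num) hn1
  exact stmt8_aux e d hde hd (Real.sqrt (∑ r, d r)) ε n Q hε hs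
    (Real.sq_sqrt hn0).symm rfl rfl c (fun r t u => rfl)
end
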